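/- arXiv:2211.06948 — 11 statements merged into one kernel-verified Lean document; each statement's English description precedes it below -/
import Mathlib

section
/- Let u, v, w : [0,∞) → [0,∞) be continuous functions with u absolutely continuous, satisfying u'(t) + 2 v(t) u(t) ≤ 2 w(t) √(u(t)) for almost every t ≥ 0. Then for every t ≥ 0, √(u(t)) ≤ e^{-V(t)} √(u(0)) + e^{-V(t)} ∫₀ᵗ e^{V(s)} w(s) ds, where V(t) = ∫₀ᵗ v(τ) dτ. -/
/-!
Let `V(t) = ∫₀ᵗ v`. For `δ > 0` the function `B(t) = e^{-V(t)} (√u(0) + δ + ∫₀ᵗ (e^{V} w + δ))`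
is positive and solves `B' = -v B + w + δ e^{-V}`, so `(B²)' = -2 v B² + 2 w B + 2 δ B e^{-V}`.
Since `u` is the integral of `u'` and `u' ≤ 2 w √u - 2 v u` almost everywhere, the continuous
function `2 w √u - 2 v u` bounds the upper right Dini derivative of `u` everywhere, and wherever
`u = B²` it is strictly below `(B²)'`. The comparison principle gives `u ≤ B²`, i.e. `√u ≤ B`;
let `δ → 0`.
-/

open MeasureTheory intervalIntegral Set Filter Topology Real

section Primitive

variable {f : ℝ → ℝ} {a b : ℝ}

theorem hasDerivWithinAt_integral_of_continuousOn_Icc {c x : ℝ} (hf : ContinuousOn f (Icc a b))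
    (hc : c ∈ Icc a b) (hx : x ∈ Ico a b) :
    HasDerivWithinAt (fun t => ∫ τ in c..t, f τ) (f x) (Ici x) x := by
  have hmem : Icc a b ∈ 𝓝[>] x := Icc_mem_nhdsGT_of_mem hx
  exact integral_hasDerivWithinAt_right
    (hf.mono (uIcc_subset_Icc hc (Ico_subset_Icc_self hx))).intervalIntegrable
    ⟨Icc a b, hmem, hf.aestronglyMeasurable measurableSet_Icc⟩
    ((hf x (Ico_subset_Icc_self hx)).mono_of_mem_nhdsWithin hmem)

theorem continuousOn_integral_of_continuousOn_Icc (hf : ContinuousOn f (Icc a b)) (hab : a ≤ b) :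
    ContinuousOn (fun t => ∫ τ in a..t, f τ) (Icc a b) := by
  rw [← uIcc_of_le hab] at hf ⊢
  exact continuousOn_primitive_interval hf.integrableOn_uIcc

end Primitive

theorem sub_le_integral_of_ae_le {u u' g : ℝ → ℝ} {a b x z : ℝ}
    (hu' : IntervalIntegrable u' volume a b)
    (hFTC : ∀ t ∈ Icc a b, u t = u a + ∫ s in a..t, u' s)
    (hg : IntervalIntegrable g volume a b) (hle : ∀ᵐ t, t ∈ Icc a b → u' t ≤ g t)
    (hax : a ≤ x) (hxz : x ≤ z) (hzb : z ≤ b) :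
    u z - u x ≤ ∫ s in x..z, g s := by
  have hx : x ∈ uIcc a b := mem_uIcc_of_le hax (hxz.trans hzb)
  have hz : z ∈ uIcc a b := mem_uIcc_of_le (hax.trans hxz) hzb
  rw [hFTC z ⟨hax.trans hxz, hzb⟩, hFTC x ⟨hax, hxz.trans hzb⟩, add_sub_add_left_eq_sub,
    integral_interval_sub_left (hu'.mono_set (uIcc_subset_uIcc_left hz))
      (hu'.mono_set (uIcc_subset_uIcc_left hx))]
  refine integral_mono_ae_restrict hxz (hu'.mono_set (uIcc_subset_uIcc hx hz))
    (hg.mono_set (uIcc_subset_uIcc hx hz)) ?_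
  filter_upwards [ae_restrict_of_ae hle, ae_restrict_mem measurableSet_Icc] with t hgt ht
  exact hgt ⟨hax.trans ht.1, ht.2.trans hzb⟩

theorem frequently_slope_lt_of_sub_le_integral {u g : ℝ → ℝ} {a b x r : ℝ}
    (hg : ContinuousOn g (Icc a b)) (hx : x ∈ Ico a b)
    (hsub : ∀ z ∈ Ioc x b, u z - u x ≤ ∫ s in x..z, g s) (hr : g x < r) :
    ∃ᶠ z in 𝓝[>] x, slope u x z < r := by
  have hG := hasDerivWithinAt_integral_of_continuousOn_Icc hg (Ico_subset_Icc_self hx) hx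
  refine Eventually.frequently ?_
  filter_upwards [hG.Ioi_of_Ici.limsup_slope_le' (lt_irrefl x) hr, Ioc_mem_nhdsGT hx.2]
    with z hGz hz
  rw [slope_def_field, integral_same, sub_zero] at hGz
  rw [slope_def_field]
  exact (div_le_div_of_nonneg_right (hsub z hz) (sub_pos.2 hz.1).le).trans_lt hGz

theorem hasDerivWithinAt_exp_neg_integral_mul {v h : ℝ → ℝ} {a b c x : ℝ}
    (hv : ContinuousOn v (Icc a b)) (hh : ContinuousOn h (Icc a b)) (hx : x ∈ Ico a b) :
    HasDerivWithinAt (fun t => exp (-∫ τ in a..t, v τ) * (c + ∫ τ in a..t, h τ))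
      (-v x * (exp (-∫ τ in a..x, v τ) * (c + ∫ τ in a..x, h τ)) +
        exp (-∫ τ in a..x, v τ) * h x) (Ici x) x := by
  have ha : a ∈ Icc a b := ⟨le_rfl, hx.1.trans hx.2.le⟩
  exact ((hasDerivWithinAt_integral_of_continuousOn_Icc hv ha hx).neg.exp.mul
    ((hasDerivWithinAt_integral_of_continuousOn_Icc hh ha hx).const_add c)).congr_deriv
    (by simp only [Pi.neg_apply]; ring)

section PerturbedBound

variable {v w : ℝ → ℝ} {c ε T : ℝ}

noncomputable def perturbedBound (v w : ℝ → ℝ) (c ε t : ℝ) : ℝ :=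
  exp (-∫ τ in (0:ℝ)..t, v τ) * (c + ∫ s in (0:ℝ)..t, (exp (∫ τ in (0:ℝ)..s, v τ) * w s + ε))

theorem continuousOn_exp_integral_mul (hv : ContinuousOn v (Icc 0 T))
    (hw : ContinuousOn w (Icc 0 T)) (hT : 0 ≤ T) :
    ContinuousOn (fun s => exp (∫ τ in (0:ℝ)..s, v τ) * w s) (Icc 0 T) :=
  (continuous_exp.comp_continuousOn (continuousOn_integral_of_continuousOn_Icc hv hT)).mul hw

theorem continuousOn_perturbedBound (hv : ContinuousOn v (Icc 0 T))
    (hw : ContinuousOn w (Icc 0 T)) (hT : 0 ≤ T) :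
    ContinuousOn (perturbedBound v w c ε) (Icc 0 T) :=
  (continuous_exp.comp_continuousOn (continuousOn_integral_of_continuousOn_Icc hv hT).neg).mul
    (continuousOn_const.add (continuousOn_integral_of_continuousOn_Icc
      ((continuousOn_exp_integral_mul hv hw hT).add continuousOn_const) hT))

theorem perturbedBound_zero : perturbedBound v w c ε 0 = c := by
  simp [perturbedBound]

theorem perturbedBound_pos (hc : 0 < c) (hε : 0 ≤ ε) {t : ℝ} (ht : 0 ≤ t)
    (hwn : ∀ s ∈ Icc 0 t, 0 ≤ w s) : 0 < perturbedBound v w c ε t := by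
  have : 0 ≤ ∫ s in (0:ℝ)..t, (exp (∫ τ in (0:ℝ)..s, v τ) * w s + ε) :=
    integral_nonneg ht fun s hs => add_nonneg (mul_nonneg (exp_pos _).le (hwn s hs)) hε
  exact mul_pos (exp_pos _) (by linarith)

theorem hasDerivWithinAt_perturbedBound (hv : ContinuousOn v (Icc 0 T))
    (hw : ContinuousOn w (Icc 0 T)) {x : ℝ} (hx : x ∈ Ico 0 T) :
    HasDerivWithinAt (perturbedBound v w c ε)
      (-v x * perturbedBound v w c ε x + w x + ε * exp (-∫ τ in (0:ℝ)..x, v τ)) (Ici x) x := by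
  have hT : 0 ≤ T := hx.1.trans hx.2.le
  refine (hasDerivWithinAt_exp_neg_integral_mul hv
    ((continuousOn_exp_integral_mul hv hw hT).add continuousOn_const) hx).congr_deriv ?_
  have hexp : exp (-∫ τ in (0:ℝ)..x, v τ) * exp (∫ τ in (0:ℝ)..x, v τ) = 1 := by
    rw [← exp_add, neg_add_cancel, exp_zero]
  simp only [perturbedBound, Pi.add_apply]
  linear_combination w x * hexp

theorem perturbedBound_eq (hv : ContinuousOn v (Icc 0 T)) (hw : ContinuousOn w (Icc 0 T))
    (hT : 0 ≤ T) :
    perturbedBound v w c ε T = exp (-∫ τ in (0:ℝ)..T, v τ) * (c + ε * T) +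
      exp (-∫ τ in (0:ℝ)..T, v τ) * ∫ s in (0:ℝ)..T, exp (∫ τ in (0:ℝ)..s, v τ) * w s := by
  rw [perturbedBound,
    integral_add ((continuousOn_exp_integral_mul hv hw hT).intervalIntegrable_of_Icc hT)
      intervalIntegrable_const, intervalIntegral.integral_const, smul_eq_mul]
  ring

end PerturbedBound

theorem le_perturbedBound_mul_self {u v w u' : ℝ → ℝ} {T c ε : ℝ} (hT : 0 ≤ T)
    (hc : 0 < c) (hε : 0 < ε) (hu0 : u 0 ≤ c * c)
    (hu : ContinuousOn u (Icc 0 T)) (hv : ContinuousOn v (Icc 0 T))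
    (hw : ContinuousOn w (Icc 0 T)) (hwn : ∀ t ∈ Icc 0 T, 0 ≤ w t)
    (hu' : IntervalIntegrable u' volume 0 T)
    (hFTC : ∀ t ∈ Icc 0 T, u t = u 0 + ∫ s in (0:ℝ)..t, u' s)
    (hineq : ∀ᵐ t, t ∈ Icc 0 T → u' t + 2 * v t * u t ≤ 2 * w t * √(u t)) :
    u T ≤ perturbedBound v w c ε T * perturbedBound v w c ε T := by
  set B := perturbedBound v w c ε
  set g : ℝ → ℝ := fun t => 2 * w t * √(u t) - 2 * v t * u t
  have hgc : ContinuousOn g (Icc 0 T) :=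
    ((continuousOn_const.mul hw).mul (continuous_sqrt.comp_continuousOn hu)).sub
      ((continuousOn_const.mul hv).mul hu)
  have hle : ∀ᵐ t, t ∈ Icc 0 T → u' t ≤ g t := by
    filter_upwards [hineq] with t ht ht0
    linarith [ht ht0]
  have hBc := continuousOn_perturbedBound (c := c) (ε := ε) hv hw hT
  have hB' := fun x (hx : x ∈ Ico 0 T) =>
    hasDerivWithinAt_perturbedBound (c := c) (ε := ε) hv hw hx
  refine image_le_of_liminf_slope_right_lt_deriv_boundary' (f' := g) hu
    (fun x hx r hr => frequently_slope_lt_of_sub_le_integral hgc hx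
      (fun z hz => sub_le_integral_of_ae_le hu' hFTC (hgc.intervalIntegrable_of_Icc hT) hle
        hx.1 hz.1.le hz.2) hr)
    (by rwa [Pi.mul_apply, perturbedBound_zero]) (hBc.mul hBc)
    (fun x hx => (hB' x hx).mul (hB' x hx)) ?_ (right_mem_Icc.2 hT)
  intro x hx (hux : u x = B x * B x)
  have hBx : 0 < B x :=
    perturbedBound_pos hc hε.le hx.1 fun s hs => hwn s ⟨hs.1, hs.2.trans hx.2.le⟩
  have hsqrt : √(u x) = B x := by rw [hux, sqrt_mul_self hBx.le]
  simp only [g, hsqrt]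
  rw [hux]
  -- at a contact point the margin over `g` is exactly `2 ε B e^{-V}`
  nlinarith [mul_pos hBx (mul_pos hε (exp_pos (-∫ τ in (0:ℝ)..x, v τ)))]

theorem stmt0_general (u v w u' : ℝ → ℝ)
    (hu : ContinuousOn u (Set.Ici 0)) (hv : ContinuousOn v (Set.Ici 0))
    (hw : ContinuousOn w (Set.Ici 0))
    (hwn : ∀ t, 0 ≤ t → 0 ≤ w t)
    (hu'int : ∀ t, 0 ≤ t → IntervalIntegrable u' volume 0 t)
    (hFTC : ∀ t, 0 ≤ t → u t = u 0 + ∫ s in (0:ℝ)..t, u' s)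
    (hineq : ∀ᵐ t ∂volume, 0 ≤ t →
      u' t + 2 * v t * u t ≤ 2 * w t * Real.sqrt (u t)) :
    ∀ t, 0 ≤ t →
      Real.sqrt (u t) ≤
        Real.exp (-(∫ τ in (0:ℝ)..t, v τ)) * Real.sqrt (u 0) +
          Real.exp (-(∫ τ in (0:ℝ)..t, v τ)) *
            ∫ s in (0:ℝ)..t, Real.exp (∫ τ in (0:ℝ)..s, v τ) * w s := by
  intro T hT
  have hvT : ContinuousOn v (Icc 0 T) := hv.mono Icc_subset_Ici_self
  have hwT : ContinuousOn w (Icc 0 T) := hw.mono Icc_subset_Ici_self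
  have hK : 0 < exp (-∫ τ in (0:ℝ)..T, v τ) * (1 + T) := by positivity
  refine le_of_forall_pos_le_add fun ε hε => ?_
  set δ := ε / (exp (-∫ τ in (0:ℝ)..T, v τ) * (1 + T))
  have hδ : 0 < δ := div_pos hε hK
  have hc : 0 < √(u 0) + δ := by positivity
  have hu0 : u 0 ≤ (√(u 0) + δ) * (√(u 0) + δ) := by
    nlinarith [sq_sqrt' (x := u 0), le_max_left (u 0) 0, sqrt_nonneg (u 0)]
  have hcomp := le_perturbedBound_mul_self hT hc hδ hu0 (hu.mono Icc_subset_Ici_self) hvT hwT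
    (fun t ht => hwn t ht.1) (hu'int T hT) (fun t ht => hFTC t ht.1)
    (by filter_upwards [hineq] with t ht ht0 using ht ht0.1)
  calc √(u T) ≤ perturbedBound v w (√(u 0) + δ) δ T := by
        simpa only [sqrt_mul_self (perturbedBound_pos hc hδ.le hT fun t ht => hwn t ht.1).le]
          using sqrt_le_sqrt hcomp
    _ = _ := by
        rw [perturbedBound_eq hvT hwT hT]
        linear_combination div_mul_cancel₀ ε hK.ne'

theorem stmt0 (u v w u' : ℝ → ℝ)
    (hu : ContinuousOn u (Set.Ici 0)) (hv : ContinuousOn v (Set.Ici 0))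
    (hw : ContinuousOn w (Set.Ici 0))
    (hun : ∀ t, 0 ≤ t → 0 ≤ u t) (hvn : ∀ t, 0 ≤ t → 0 ≤ v t)
    (hwn : ∀ t, 0 ≤ t → 0 ≤ w t)
    (hu'int : ∀ t, 0 ≤ t → IntervalIntegrable u' volume 0 t)
    (hFTC : ∀ t, 0 ≤ t → u t = u 0 + ∫ s in (0:ℝ)..t, u' s)
    (hineq : ∀ᵐ t ∂volume, 0 ≤ t →
      u' t + 2 * v t * u t ≤ 2 * w t * Real.sqrt (u t)) :
    ∀ t, 0 ≤ t →
      Real.sqrt (u t) ≤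
        Real.exp (-(∫ τ in (0:ℝ)..t, v τ)) * Real.sqrt (u 0) +
          Real.exp (-(∫ τ in (0:ℝ)..t, v τ)) *
            ∫ s in (0:ℝ)..t, Real.exp (∫ τ in (0:ℝ)..s, v τ) * w s :=
  stmt0_general u v w u' hu hv hw hwn hu'int hFTC hineq
end

section
/- Let C be a nonempty closed convex subset of a real Hilbert space H, f : C → C an α-contraction with α ∈ [0,1), and T : C → C nonexpansive with Fix(T) nonempty. Then there exists a unique q* ∈ Fix(T) such that ⟨f(q*) − q*, z − q*⟩ ≤ 0 for all z ∈ Fix(T). -/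
open RealInnerProductSpace

lemma combo_aux {H : Type*} [NormedAddCommGroup H] [InnerProductSpace ℝ H]
    (p q : H) (a b : ℝ) (hab : a + b = 1) :
    ‖a • p + b • q‖ ^ 2 = a * ‖p‖ ^ 2 + b * ‖q‖ ^ 2 - a * b * ‖q - p‖ ^ 2 := by
  rw [norm_add_sq_real, norm_sub_sq_real, norm_smul, norm_smul,
    real_inner_smul_left, real_inner_smul_right, real_inner_comm q p]
  simp only [Real.norm_eq_abs, mul_pow, sq_abs]
  linear_combination (a * ‖p‖ ^ 2 + b * ‖q‖ ^ 2) * hab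

lemma combo_norm_sq {H : Type*} [NormedAddCommGroup H] [InnerProductSpace ℝ H]
    (x y u : H) (a b : ℝ) (hab : a + b = 1) :
    ‖u - (a • x + b • y)‖ ^ 2 =
      a * ‖u - x‖ ^ 2 + b * ‖u - y‖ ^ 2 - a * b * ‖x - y‖ ^ 2 := by
  have hp : u - (a • x + b • y) = a • (u - x) + b • (u - y) := by
    have h : a • (u - x) + b • (u - y) = (a + b) • u - (a • x + b • y) := by module
    rw [h, hab, one_smul]
  have hxy : x - y = (u - y) - (u - x) := by abel
  rw [hp, hxy]
  exact combo_aux (u - x) (u - y) a b hab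

theorem stmt2 {H : Type*} [NormedAddCommGroup H] [InnerProductSpace ℝ H]
    [CompleteSpace H]
    (C : Set H) (hCne : C.Nonempty) (hCcl : IsClosed C) (hCconv : Convex ℝ C)
    (f T : H → H) (hfC : Set.MapsTo f C C) (hTC : Set.MapsTo T C C)
    (α : ℝ) (hα0 : 0 ≤ α) (hα1 : α < 1)
    (hf : ∀ x ∈ C, ∀ y ∈ C, ‖f x - f y‖ ≤ α * ‖x - y‖)
    (hT : ∀ x ∈ C, ∀ y ∈ C, ‖T x - T y‖ ≤ ‖x - y‖)
    (hFix : {x | x ∈ C ∧ T x = x}.Nonempty) :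
    ∃! q : H, (q ∈ C ∧ T q = q) ∧
      ∀ z, z ∈ C ∧ T z = z → ⟪f q - q, z - q⟫ ≤ 0 := by
  set F : Set H := {x | x ∈ C ∧ T x = x} with hF
  -- F is closed
  have hFclosed : IsClosed F := by
    apply IsSeqClosed.isClosed
    intro xs x hxs hx
    have hxC : x ∈ C := hCcl.isSeqClosed (fun n => (hxs n).1) hx
    refine ⟨hxC, ?_⟩
    have key : ∀ n, ‖T x - x‖ ≤ 2 * ‖x - xs n‖ := fun n => by
      calc ‖T x - x‖ ≤ ‖T x - T (xs n)‖ + ‖T (xs n) - x‖ :=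
            norm_sub_le_norm_sub_add_norm_sub _ _ _
        _ = ‖T x - T (xs n)‖ + ‖xs n - x‖ := by rw [(hxs n).2]
        _ ≤ ‖x - xs n‖ + ‖xs n - x‖ := by
            gcongr; exact hT x hxC (xs n) (hxs n).1
        _ = 2 * ‖x - xs n‖ := by rw [norm_sub_rev x]; ring
    have hlim : Filter.Tendsto (fun n => 2 * ‖x - xs n‖) Filter.atTop (nhds 0) := by
      have h1 : Filter.Tendsto (fun n => dist (xs n) x) Filter.atTop (nhds 0) :=
        tendsto_iff_dist_tendsto_zero.mp hx
      have h2 := h1.const_mul 2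
      simp only [mul_zero] at h2
      convert h2 using 2 with n
      rw [dist_eq_norm, norm_sub_rev]
    have h0 : ‖T x - x‖ ≤ 0 := ge_of_tendsto' hlim key
    have h0' : ‖T x - x‖ = 0 := le_antisymm h0 (norm_nonneg _)
    rwa [norm_sub_eq_zero_iff] at h0'
  -- F is convex
  have hFconv : Convex ℝ F := by
    intro x hxF y hyF a b ha hb hab
    have ha' : a = 1 - b := by linarith
    subst ha'
    have hm : (1 - b) • x + b • y ∈ C := hCconv hxF.1 hyF.1 ha hb hab
    refine ⟨hm, ?_⟩
    have h1 : ‖T ((1 - b) • x + b • y) - x‖ ≤ ‖((1 - b) • x + b • y) - x‖ := by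
      calc ‖T ((1 - b) • x + b • y) - x‖ = ‖T ((1 - b) • x + b • y) - T x‖ := by rw [hxF.2]
        _ ≤ ‖((1 - b) • x + b • y) - x‖ := hT _ hm x hxF.1
    have h2 : ‖T ((1 - b) • x + b • y) - y‖ ≤ ‖((1 - b) • x + b • y) - y‖ := by
      calc ‖T ((1 - b) • x + b • y) - y‖ = ‖T ((1 - b) • x + b • y) - T y‖ := by rw [hyF.2]
        _ ≤ ‖((1 - b) • x + b • y) - y‖ := hT _ hm y hyF.1
    have h3 : ‖((1 - b) • x + b • y) - x‖ = b * ‖x - y‖ := by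
      have he : ((1 - b) • x + b • y) - x = b • (y - x) := by module
      rw [he, norm_smul, Real.norm_eq_abs, abs_of_nonneg hb, norm_sub_rev]
    have h4 : ‖((1 - b) • x + b • y) - y‖ = (1 - b) * ‖x - y‖ := by
      have he : ((1 - b) • x + b • y) - y = (1 - b) • (x - y) := by module
      rw [he, norm_smul, Real.norm_eq_abs, abs_of_nonneg ha]
    have e1 := combo_norm_sq x y (T ((1 - b) • x + b • y)) (1 - b) b hab
    have h1' : ‖T ((1 - b) • x + b • y) - x‖ ^ 2 ≤ (b * ‖x - y‖) ^ 2 := by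
      rw [← h3]; exact pow_le_pow_left₀ (norm_nonneg _) h1 2
    have h2' : ‖T ((1 - b) • x + b • y) - y‖ ^ 2 ≤ ((1 - b) * ‖x - y‖) ^ 2 := by
      rw [← h4]; exact pow_le_pow_left₀ (norm_nonneg _) h2 2
    have hzero : (1 - b) * (b * ‖x - y‖) ^ 2 + b * ((1 - b) * ‖x - y‖) ^ 2
        - (1 - b) * b * ‖x - y‖ ^ 2 = 0 := by ring
    have hTm : ‖T ((1 - b) • x + b • y) - ((1 - b) • x + b • y)‖ ^ 2 ≤ 0 := by
      rw [e1]
      have := mul_le_mul_of_nonneg_left h1' ha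
      have := mul_le_mul_of_nonneg_left h2' hb
      linarith
    have hTm0 : ‖T ((1 - b) • x + b • y) - ((1 - b) • x + b • y)‖ ^ 2 = 0 :=
      le_antisymm hTm (sq_nonneg _)
    have := (pow_eq_zero_iff two_ne_zero).mp hTm0
    rwa [norm_sub_eq_zero_iff] at this
  have hFne : F.Nonempty := hFix
  have hFcomplete : IsComplete F := hFclosed.isComplete
  -- projection onto F
  obtain ⟨P, hP⟩ := Classical.axiomOfChoice
    (exists_norm_eq_iInf_of_complete_convex hFne hFcomplete hFconv)
  have hPmem : ∀ u, P u ∈ F := fun u => (hP u).1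
  have hchar : ∀ u, ∀ w ∈ F, ⟪u - P u, w - P u⟫ ≤ 0 := fun u =>
    (norm_eq_iInf_iff_real_inner_le_zero hFconv (hPmem u)).mp (hP u).2
  have hPnonexp : ∀ u v, ‖P u - P v‖ ≤ ‖u - v‖ := by
    intro u v
    have h1 := hchar u (P v) (hPmem v)
    have h2 := hchar v (P u) (hPmem u)
    have hsq : ‖P u - P v‖ ^ 2 ≤ ⟪u - v, P u - P v⟫ := by
      rw [← real_inner_self_eq_norm_sq]
      simp only [inner_sub_left, inner_sub_right] at h1 h2 ⊢
      linarith [real_inner_comm (P u) (P v), real_inner_comm u (P v),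
        real_inner_comm v (P u), real_inner_comm u v]
    have hcs := real_inner_le_norm (u - v) (P u - P v)
    nlinarith [norm_nonneg (P u - P v), norm_nonneg (u - v)]
  -- Banach fixed point on the subtype
  haveI : Nonempty F := hFne.to_subtype
  haveI : CompleteSpace F := hFclosed.completeSpace_coe
  set Φ : F → F := fun x => ⟨P (f x), hPmem _⟩ with hΦ
  have hΦlip : LipschitzWith ⟨α, hα0⟩ Φ := by
    apply LipschitzWith.of_dist_le_mul
    intro x y
    have hd : dist (Φ x) (Φ y) = ‖P (f (x : H)) - P (f (y : H))‖ := by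
      simp [hΦ, Subtype.dist_eq, dist_eq_norm]
    rw [hd]
    calc ‖P (f (x : H)) - P (f (y : H))‖ ≤ ‖f (x : H) - f (y : H)‖ := hPnonexp _ _
      _ ≤ α * ‖(x : H) - (y : H)‖ := hf _ (x.2.1) _ (y.2.1)
      _ = (⟨α, hα0⟩ : NNReal) * dist x y := by
          rw [Subtype.dist_eq, dist_eq_norm]
  have hcontr : ContractingWith ⟨α, hα0⟩ Φ := ⟨by exact_mod_cast hα1, hΦlip⟩
  set q : F := ContractingWith.fixedPoint Φ hcontr with hq
  have hqfix : Φ q = q := hcontr.fixedPoint_isFixedPt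
  have hPq : P (f (q : H)) = (q : H) := congrArg Subtype.val hqfix
  have hqVI : ∀ z, z ∈ C ∧ T z = z → ⟪f (q : H) - (q : H), z - (q : H)⟫ ≤ 0 := by
    intro z hz
    have := hchar (f (q : H)) z hz
    rwa [hPq] at this
  refine ⟨(q : H), ⟨q.2, hqVI⟩, ?_⟩
  -- uniqueness
  intro y hy
  obtain ⟨hyF, hyVI⟩ := hy
  have h1 : ⟪f y - y, (q : H) - y⟫ ≤ 0 := hyVI _ q.2
  have h2 : ⟪f (q : H) - (q : H), y - (q : H)⟫ ≤ 0 := hqVI y hyF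
  have hsq : ‖y - (q : H)‖ ^ 2 ≤ ⟪f y - f (q : H), y - (q : H)⟫ := by
    rw [← real_inner_self_eq_norm_sq]
    simp only [inner_sub_left, inner_sub_right] at h1 h2 ⊢
    linarith [real_inner_comm (f y) (q : H), real_inner_comm (f y) y,
      real_inner_comm y (q : H), real_inner_comm (f (q : H)) y,
      real_inner_comm (f (q : H)) (q : H), real_inner_comm (q : H) (q : H)]
  have hcs := real_inner_le_norm (f y - f (q : H)) (y - (q : H))
  have hfy : ‖f y - f (q : H)‖ ≤ α * ‖y - (q : H)‖ := hf y hyF.1 _ q.2.1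
  have hd := norm_nonneg (y - (q : H))
  have h5 : ‖f y - f (q : H)‖ * ‖y - (q : H)‖ ≤ α * ‖y - (q : H)‖ * ‖y - (q : H)‖ :=
    mul_le_mul_of_nonneg_right hfy hd
  have h6 : ‖y - (q : H)‖ ^ 2 ≤ α * ‖y - (q : H)‖ ^ 2 := by nlinarith
  have h7 : ‖y - (q : H)‖ ^ 2 ≤ 0 := by nlinarith
  have h8 : ‖y - (q : H)‖ ^ 2 = 0 := le_antisymm h7 (sq_nonneg _)
  have h9 := (pow_eq_zero_iff two_ne_zero).mp h8
  rwa [norm_sub_eq_zero_iff] at h9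
end

section
/- Let x : [0,∞) → C be a continuously differentiable solution of x'(t) + x(t) = θ(t) f(x(t)) + (1 − θ(t)) T(x(t)) with x(t) ∈ C for all t ≥ 0, where θ : [0,∞) → (0,1] is continuous. Let q* ∈ Fix(T) satisfy ⟨f(q*) − q*, z − q*⟩ ≤ 0 for all z ∈ Fix(T). Then sup_{t ≥ 0} ‖x(t) − q*‖ ≤ max( ‖x(0) − q*‖, ‖f(q*) − q*‖ / (1 − α) ); in particular the trajectory is bounded. -/
open RealInnerProductSpace Set

/-!
Where `‖x t - q‖` exceeds `K = ‖f q - q‖ / (1 - α)`, both `f (x t)` and `T (x t)` lie in the closed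
ball around `q` of radius `‖x t - q‖` (for `f` by the triangle inequality through `f q`), hence so
does their convex combination `x' t + x t`. Then `⟪x' t, x t - q⟫ ≤ 0`, so `‖x t - q‖²` cannot grow
while it is above `max ‖x 0 - q‖ K`.
-/

theorem le_of_hasDerivAt_nonpos_above {φ φ' : ℝ → ℝ} {M : ℝ}
    (hφ : ∀ t, 0 ≤ t → HasDerivAt φ (φ' t) t) (hφ' : ∀ t, 0 ≤ t → M < φ t → φ' t ≤ 0)
    (h0 : φ 0 ≤ M) {t : ℝ} (ht : 0 ≤ t) : φ t ≤ M := by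
  refine le_of_forall_pos_le_add fun ε hε => ?_
  set δ := ε / (1 + t)
  have hδ : 0 < δ := by positivity
  -- a strictly increasing barrier, so that touching it forces `φ` above `M`
  have hbarrier : ∀ s ∈ Icc 0 t, φ s ≤ M + δ * (1 + s) := by
    refine image_le_of_deriv_right_lt_deriv_boundary'
      (fun s hs => (hφ s hs.1).continuousAt.continuousWithinAt)
      (fun s hs => (hφ s hs.1).hasDerivWithinAt) (by linarith) (by fun_prop)
      (fun s _ => ((hasDerivAt_id s).const_add 1 |>.const_mul δ |>.const_add M).hasDerivWithinAt)
      fun s hs hs_eq => ?_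
    have : M < φ s := by rw [hs_eq]; nlinarith [hs.1]
    simpa using (hφ' s hs.1 this).trans_lt hδ
  calc φ t ≤ M + δ * (1 + t) := hbarrier t ⟨ht, le_rfl⟩
    _ = M + ε := by simp only [δ]; field_simp

theorem norm_apply_sub_le_of_contraction {E : Type*} [SeminormedAddCommGroup E] {f : E → E}
    {α : ℝ} {y q : E}
    (hf : ‖f y - f q‖ ≤ α * ‖y - q‖) (hfar : ‖f q - q‖ ≤ (1 - α) * ‖y - q‖) :
    ‖f y - q‖ ≤ ‖y - q‖ :=
  calc ‖f y - q‖ ≤ ‖f y - f q‖ + ‖f q - q‖ := norm_sub_le_norm_sub_add_norm_sub _ _ _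
    _ ≤ ‖y - q‖ := by linarith

section

variable {H : Type*} [NormedAddCommGroup H] [InnerProductSpace ℝ H]

theorem norm_sub_le_of_inner_deriv_nonpos_above {x x' : ℝ → H} {q : H} {R : ℝ}
    (hx : ∀ t, 0 ≤ t → HasDerivAt x (x' t) t)
    (hx' : ∀ t, 0 ≤ t → R < ‖x t - q‖ → ⟪x' t, x t - q⟫ ≤ 0)
    (h0 : ‖x 0 - q‖ ≤ R) {t : ℝ} (ht : 0 ≤ t) : ‖x t - q‖ ≤ R := by
  have hR : 0 ≤ R := (norm_nonneg _).trans h0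
  have hsq : ‖x t - q‖ ^ 2 ≤ R ^ 2 := by
    refine le_of_hasDerivAt_nonpos_above (φ := (‖x · - q‖ ^ 2))
      (fun s hs => ((hx s hs).sub_const q).norm_sq) (fun s hs hRs => ?_)
      (pow_le_pow_left₀ (norm_nonneg _) h0 2) ht
    have := hx' s hs (lt_of_pow_lt_pow_left₀ 2 (norm_nonneg _) hRs)
    rw [real_inner_comm]
    linarith
  exact (pow_le_pow_iff_left₀ (norm_nonneg _) hR two_ne_zero).1 hsq

theorem inner_sub_nonpos_of_norm_sub_le {w y q : H} (h : ‖w - q‖ ≤ ‖y - q‖) :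
    ⟪w - y, y - q⟫ ≤ 0 := by
  have hwy : w - y = (w - q) - (y - q) := by abel
  calc ⟪w - y, y - q⟫ = ⟪w - q, y - q⟫ - ‖y - q‖ ^ 2 := by
        rw [hwy, inner_sub_left, real_inner_self_eq_norm_sq]
    _ ≤ ‖w - q‖ * ‖y - q‖ - ‖y - q‖ ^ 2 := by gcongr; exact real_inner_le_norm _ _
    _ ≤ 0 := by nlinarith [norm_nonneg (y - q)]

end

theorem stmt5_general {H : Type*} [NormedAddCommGroup H] [InnerProductSpace ℝ H]
    (C : Set H)
    (f T : H → H)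
    (α : ℝ) (hα1 : α < 1)
    (hf : ∀ x ∈ C, ∀ y ∈ C, ‖f x - f y‖ ≤ α * ‖x - y‖)
    (hT : ∀ x ∈ C, ∀ y ∈ C, ‖T x - T y‖ ≤ ‖x - y‖)
    (θ : ℝ → ℝ) (hθ : ∀ t, 0 ≤ t → 0 < θ t ∧ θ t ≤ 1)
    (x x' : ℝ → H) (hx' : ∀ t, 0 ≤ t → HasDerivAt x (x' t) t)
    (hode : ∀ t, 0 ≤ t →
      x' t + x t = θ t • f (x t) + (1 - θ t) • T (x t))
    (hxC : ∀ t, 0 ≤ t → x t ∈ C)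
    (q : H) (hq : q ∈ C ∧ T q = q) :
    ∀ t, 0 ≤ t →
      ‖x t - q‖ ≤ max ‖x 0 - q‖ (‖f q - q‖ / (1 - α)) := by
  refine fun t ht => norm_sub_le_of_inner_deriv_nonpos_above hx' (fun s hs hfar => ?_)
    (le_max_left _ _) ht
  obtain ⟨hθ0, hθ1⟩ := hθ s hs
  set y := x s
  have hfy : ‖f y - q‖ ≤ ‖y - q‖ := by
    refine norm_apply_sub_le_of_contraction (hf y (hxC s hs) q hq.1) ?_
    rw [mul_comm, ← div_le_iff₀ (sub_pos.2 hα1)]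
    exact ((le_max_right _ _).trans_lt hfar).le
  have hTy : ‖T y - q‖ ≤ ‖y - q‖ := by
    simpa only [hq.2] using hT y (hxC s hs) q hq.1
  have hcombo : ‖(θ s • f y + (1 - θ s) • T y) - q‖ ≤ ‖y - q‖ := by
    simpa only [← mem_closedBall_iff_norm] using
      convex_closedBall q ‖y - q‖ (mem_closedBall_iff_norm.2 hfy) (mem_closedBall_iff_norm.2 hTy)
        hθ0.le (sub_nonneg.2 hθ1) (add_sub_cancel _ _)
  rw [eq_sub_of_add_eq (hode s hs)]
  exact inner_sub_nonpos_of_norm_sub_le hcombo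

theorem stmt5 {H : Type*} [NormedAddCommGroup H] [InnerProductSpace ℝ H]
    [CompleteSpace H]
    (C : Set H) (hCne : C.Nonempty) (hCcl : IsClosed C) (hCconv : Convex ℝ C)
    (f T : H → H) (hfC : Set.MapsTo f C C) (hTC : Set.MapsTo T C C)
    (α : ℝ) (hα0 : 0 ≤ α) (hα1 : α < 1)
    (hf : ∀ x ∈ C, ∀ y ∈ C, ‖f x - f y‖ ≤ α * ‖x - y‖)
    (hT : ∀ x ∈ C, ∀ y ∈ C, ‖T x - T y‖ ≤ ‖x - y‖)
    (θ : ℝ → ℝ) (hθc : Continuous θ) (hθ : ∀ t, 0 ≤ t → 0 < θ t ∧ θ t ≤ 1)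
    (x x' : ℝ → H) (hx' : ∀ t, 0 ≤ t → HasDerivAt x (x' t) t)
    (hx'c : Continuous x')
    (hode : ∀ t, 0 ≤ t →
      x' t + x t = θ t • f (x t) + (1 - θ t) • T (x t))
    (hxC : ∀ t, 0 ≤ t → x t ∈ C)
    (q : H) (hq : q ∈ C ∧ T q = q)
    (hVP : ∀ z, z ∈ C ∧ T z = z → ⟪f q - q, z - q⟫ ≤ 0) :
    ∀ t, 0 ≤ t →
      ‖x t - q‖ ≤ max ‖x 0 - q‖ (‖f q - q‖ / (1 - α)) :=
  stmt5_general C f T α hα1 hf hT θ hθ x x' hx' hode hxC q hq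
end

section
/- Let u(t) = ‖x(t) − q*‖² where x is a C¹ solution of x'(t) + x(t) = θ(t) f(x(t)) + (1 − θ(t)) T(x(t)) with values in C, and q* solves the variational problem (VP). Then for every t ≥ 0, u'(t) + 2(1−α)θ(t) u(t) ≤ 2 θ(t) ⟨f(q*) − q*, x(t) − q*⟩, and in particular u'(t) + 2(1−α)θ(t) u(t) ≤ 2 θ(t) ‖f(q*) − q*‖ √(u(t)). -/
open RealInnerProductSpace

theorem stmt6 {H : Type*} [NormedAddCommGroup H] [InnerProductSpace ℝ H]
    [CompleteSpace H]
    (C : Set H) (hCne : C.Nonempty) (hCcl : IsClosed C) (hCconv : Convex ℝ C)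
    (f T : H → H) (hfC : Set.MapsTo f C C) (hTC : Set.MapsTo T C C)
    (α : ℝ) (hα0 : 0 ≤ α) (hα1 : α < 1)
    (hf : ∀ x ∈ C, ∀ y ∈ C, ‖f x - f y‖ ≤ α * ‖x - y‖)
    (hT : ∀ x ∈ C, ∀ y ∈ C, ‖T x - T y‖ ≤ ‖x - y‖)
    (θ : ℝ → ℝ) (hθc : Continuous θ) (hθ : ∀ t, 0 ≤ t → 0 < θ t ∧ θ t ≤ 1)
    (x x' : ℝ → H) (hx' : ∀ t, 0 ≤ t → HasDerivAt x (x' t) t)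
    (hode : ∀ t, 0 ≤ t →
      x' t + x t = θ t • f (x t) + (1 - θ t) • T (x t))
    (hxC : ∀ t, 0 ≤ t → x t ∈ C)
    (q : H) (hq : q ∈ C ∧ T q = q)
    (hVP : ∀ z, z ∈ C ∧ T z = z → ⟪f q - q, z - q⟫ ≤ 0) :
    ∀ t, 0 ≤ t → ∀ u' : ℝ,
      HasDerivAt (fun s => ‖x s - q‖ ^ 2) u' t →
      (u' + 2 * (1 - α) * θ t * ‖x t - q‖ ^ 2 ≤
          2 * θ t * ⟪f q - q, x t - q⟫) ∧
      (u' + 2 * (1 - α) * θ t * ‖x t - q‖ ^ 2 ≤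
          2 * θ t * ‖f q - q‖ * Real.sqrt (‖x t - q‖ ^ 2)) := by
  intro t ht u' hu'
  -- derivative of the squared norm
  have hg : HasDerivAt (fun s => x s - q) (x' t) t := (hx' t ht).sub_const q
  have hd : HasDerivAt (fun s => ‖x s - q‖ ^ 2)
      (⟪x t - q, x' t⟫ + ⟪x' t, x t - q⟫) t := by
    have := hg.inner ℝ hg
    simpa [real_inner_self_eq_norm_sq] using this
  have hu : u' = 2 * ⟪x' t, x t - q⟫ := by
    have := hu'.unique hd
    rw [this, real_inner_comm (x t - q) (x' t)]; ring
  -- key inner product estimate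
  have hxc := hxC t ht
  have hθt := (hθ t ht).1
  have hTx : ⟪T (x t) - q, x t - q⟫ ≤ ‖x t - q‖ ^ 2 := by
    calc ⟪T (x t) - q, x t - q⟫ ≤ ‖T (x t) - q‖ * ‖x t - q‖ :=
          real_inner_le_norm _ _
      _ ≤ ‖x t - q‖ * ‖x t - q‖ := by
          apply mul_le_mul_of_nonneg_right _ (norm_nonneg _)
          have := hT (x t) hxc q hq.1
          rwa [hq.2] at this
      _ = ‖x t - q‖ ^ 2 := by ring
  have hfx : ⟪f (x t) - q, x t - q⟫ ≤ α * ‖x t - q‖ ^ 2 + ⟪f q - q, x t - q⟫ := by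
    have h1 : ⟪f (x t) - f q, x t - q⟫ ≤ α * ‖x t - q‖ ^ 2 := by
      calc ⟪f (x t) - f q, x t - q⟫ ≤ ‖f (x t) - f q‖ * ‖x t - q‖ :=
            real_inner_le_norm _ _
        _ ≤ (α * ‖x t - q‖) * ‖x t - q‖ :=
            mul_le_mul_of_nonneg_right (hf (x t) hxc q hq.1) (norm_nonneg _)
        _ = α * ‖x t - q‖ ^ 2 := by ring
    have : ⟪f (x t) - q, x t - q⟫ = ⟪f (x t) - f q, x t - q⟫ + ⟪f q - q, x t - q⟫ := by
      rw [← inner_add_left]; congr 1; abel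
    linarith
  have hode' : x' t = θ t • (f (x t) - q) + (1 - θ t) • (T (x t) - q) - (x t - q) := by
    have h := hode t ht
    have : x' t = θ t • f (x t) + (1 - θ t) • T (x t) - x t := by
      rw [← h]; abel
    rw [this]
    simp [smul_sub, sub_smul]
    abel
  have hinner : ⟪x' t, x t - q⟫ ≤
      -(1 - α) * θ t * ‖x t - q‖ ^ 2 + θ t * ⟪f q - q, x t - q⟫ := by
    rw [hode']
    rw [inner_sub_left, inner_add_left, real_inner_smul_left, real_inner_smul_left,
      real_inner_self_eq_norm_sq]
    have h2 : (1 - θ t) * ⟪T (x t) - q, x t - q⟫ ≤ (1 - θ t) * ‖x t - q‖ ^ 2 :=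
      mul_le_mul_of_nonneg_left hTx (by linarith [(hθ t ht).2])
    have h3 : θ t * ⟪f (x t) - q, x t - q⟫ ≤
        θ t * (α * ‖x t - q‖ ^ 2 + ⟪f q - q, x t - q⟫) :=
      mul_le_mul_of_nonneg_left hfx hθt.le
    nlinarith
  constructor
  · rw [hu]; nlinarith
  · have hcs : ⟪f q - q, x t - q⟫ ≤ ‖f q - q‖ * ‖x t - q‖ := real_inner_le_norm _ _
    have hsq : Real.sqrt (‖x t - q‖ ^ 2) = ‖x t - q‖ :=
      Real.sqrt_sq (norm_nonneg _)
    rw [hu, hsq]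
    nlinarith
end

section
/- Let θ : [0,∞) → (0,∞) be absolutely continuous with ∫₀^∞ θ(t) dt = ∞ and ∫₀^∞ |θ'(t)| dt < ∞, and let γ > 0. Define Θ(t) = ∫₀ᵗ θ(s) ds and r(t) = e^{−γΘ(t)} ∫₀ᵗ e^{γΘ(s)} |θ'(s)| ds. Then r(t) → 0 as t → ∞. -/
open MeasureTheory Filter Topology

theorem stmt7 (θ θ' : ℝ → ℝ) (γ : ℝ) (hγ : 0 < γ)
    (hθpos : ∀ t, 0 ≤ t → 0 < θ t)
    (hθc : ContinuousOn θ (Set.Ici 0))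
    (hθ'int : ∀ t, 0 ≤ t → IntervalIntegrable θ' volume 0 t)
    (hFTC : ∀ t, 0 ≤ t → θ t = θ 0 + ∫ s in (0:ℝ)..t, θ' s)
    (hdiv : Tendsto (fun t => ∫ s in (0:ℝ)..t, θ s) atTop atTop)
    (hL1 : IntegrableOn (fun t => |θ' t|) (Set.Ici 0) volume) :
    Tendsto (fun t =>
      Real.exp (-(γ * ∫ s in (0:ℝ)..t, θ s)) *
        ∫ s in (0:ℝ)..t, Real.exp (γ * ∫ τ in (0:ℝ)..s, θ τ) * |θ' s|)
      atTop (𝓝 0) := by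
  set Θ : ℝ → ℝ := fun t => ∫ s in (0:ℝ)..t, θ s with hΘdef
  set g : ℝ → ℝ := fun s => Real.exp (γ * Θ s) * |θ' s| with hgdef
  -- interval integrability of θ
  have hθint : ∀ a b : ℝ, 0 ≤ a → 0 ≤ b → IntervalIntegrable θ volume a b := by
    intro a b ha hb
    refine (hθc.mono ?_).intervalIntegrable
    rw [Set.uIcc_eq_union]
    exact Set.union_subset (Set.Icc_subset_Ici_self.trans (by simp [Set.Ici_subset_Ici, ha]))
      (Set.Icc_subset_Ici_self.trans (by simp [Set.Ici_subset_Ici, hb]))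
  -- monotonicity of Θ on [0, ∞)
  have hΘmono : ∀ s t : ℝ, 0 ≤ s → s ≤ t → Θ s ≤ Θ t := by
    intro s t hs hst
    have hsplit := intervalIntegral.integral_add_adjacent_intervals
      (hθint 0 s le_rfl hs) (hθint s t hs (hs.trans hst))
    have hnn : 0 ≤ ∫ x in s..t, θ x :=
      intervalIntegral.integral_nonneg hst (fun x hx => (hθpos x (hs.trans hx.1)).le)
    simp only [hΘdef]
    rw [← hsplit]
    linarith
  -- continuity of Θ on [0, b]
  have hΘcont : ∀ b : ℝ, 0 ≤ b → ContinuousOn Θ (Set.Icc 0 b) := by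
    intro b hb
    have hint : IntegrableOn θ (Set.uIcc 0 b) volume := by
      rw [Set.uIcc_of_le hb]
      exact (hθc.mono Set.Icc_subset_Ici_self).integrableOn_Icc
    have : ContinuousOn Θ (Set.uIcc 0 b) :=
      intervalIntegral.continuousOn_primitive_interval hint
    rwa [Set.uIcc_of_le hb] at this
  -- interval integrability of |θ'|
  have habs : ∀ a b : ℝ, 0 ≤ a → 0 ≤ b → IntervalIntegrable (fun s => |θ' s|) volume a b := by
    intro a b ha hb
    refine ((hθ'int (max a b) (le_max_of_le_left ha)).abs).mono_set ?_
    rw [Set.uIcc_of_le (le_max_of_le_left ha), Set.uIcc_eq_union]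
    exact Set.union_subset (Set.Icc_subset_Icc ha (le_max_right a b))
      (Set.Icc_subset_Icc hb (le_max_left a b))
  -- interval integrability of g
  have hgint : ∀ a b : ℝ, 0 ≤ a → 0 ≤ b → IntervalIntegrable g volume a b := by
    intro a b ha hb
    refine (habs a b ha hb).continuousOn_mul ?_
    have hsub : Set.uIcc a b ⊆ Set.Icc 0 (max a b) := by
      rw [Set.uIcc_eq_union]
      exact Set.union_subset (Set.Icc_subset_Icc ha (le_max_right a b))
        (Set.Icc_subset_Icc hb (le_max_left a b))
    exact (Real.continuous_exp.comp_continuousOn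
      (((hΘcont (max a b) (le_max_of_le_left ha)).mono hsub).const_smul γ)).congr
      (by intro x hx; simp [smul_eq_mul])
  have hg0 : ∀ s, 0 ≤ g s := fun s => mul_nonneg (Real.exp_pos _).le (abs_nonneg _)
  rw [NormedAddCommGroup.tendsto_nhds_zero]
  intro ε hε
  -- tail smallness of |θ'|
  set L := ∫ s in Set.Ioi (0:ℝ), |θ' s| with hL
  set I : ℝ → ℝ := fun t => ∫ s in (0:ℝ)..t, |θ' s| with hI
  have hL1' : IntegrableOn (fun t => |θ' t|) (Set.Ioi 0) volume :=
    hL1.mono_set Set.Ioi_subset_Ici_self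
  have hIto : Tendsto I atTop (𝓝 L) :=
    MeasureTheory.intervalIntegral_tendsto_integral_Ioi 0 hL1' tendsto_id
  have hIle : ∀ t, 0 ≤ t → I t ≤ L := by
    intro t ht
    simp only [hI, hL]
    rw [intervalIntegral.integral_of_le ht]
    refine setIntegral_mono_set hL1' ?_ ?_
    · exact Eventually.of_forall fun x => abs_nonneg _
    · exact HasSubset.Subset.eventuallyLE Set.Ioc_subset_Ioi_self
  obtain ⟨T, hT0, hTI⟩ : ∃ T, 0 ≤ T ∧ L - ε/2 < I T :=
    (((eventually_ge_atTop (0:ℝ)).and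
      (hIto.eventually (eventually_gt_nhds (by linarith)))).exists).imp (fun T h => ⟨h.1, h.2⟩)
  have htail : ∀ t, T ≤ t → (∫ s in T..t, |θ' s|) < ε/2 := by
    intro t ht
    have hsplit := intervalIntegral.integral_add_adjacent_intervals
      (habs 0 T le_rfl hT0) (habs T t hT0 (hT0.trans ht))
    have h1 : I T + (∫ s in T..t, |θ' s|) = I t := hsplit
    have h2 := hIle t (hT0.trans ht)
    linarith
  -- e^{-γΘ t} * F T → 0
  set C := ∫ s in (0:ℝ)..T, g s with hC
  have hexp0 : Tendsto (fun t => Real.exp (-(γ * Θ t)) * C) atTop (𝓝 0) := by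
    have h1 : Tendsto (fun t => -(γ * Θ t)) atTop atBot :=
      tendsto_neg_atBot_iff.mpr (hdiv.const_mul_atTop hγ)
    simpa using (Real.tendsto_exp_atBot.comp h1).mul_const C
  have hev : ∀ᶠ t in atTop, Real.exp (-(γ * Θ t)) * C < ε/2 :=
    hexp0.eventually (eventually_lt_nhds (by linarith))
  filter_upwards [eventually_ge_atTop T, hev] with t ht hevt
  have ht0 : (0:ℝ) ≤ t := hT0.trans ht
  have hsplit : (∫ s in (0:ℝ)..t, g s) = C + ∫ s in T..t, g s :=
    (intervalIntegral.integral_add_adjacent_intervals (hgint 0 T le_rfl hT0)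
      (hgint T t hT0 ht0)).symm
  have hbound : (∫ s in T..t, g s) ≤ Real.exp (γ * Θ t) * ∫ s in T..t, |θ' s| := by
    rw [← intervalIntegral.integral_const_mul]
    refine intervalIntegral.integral_mono_on ht (hgint T t hT0 ht0)
      ((habs T t hT0 ht0).const_mul _) ?_
    intro s hs
    have hΘst : Θ s ≤ Θ t := hΘmono s t (hT0.trans hs.1) hs.2
    exact mul_le_mul_of_nonneg_right
      (Real.exp_le_exp.mpr (mul_le_mul_of_nonneg_left hΘst hγ.le)) (abs_nonneg _)
  have hCnn : 0 ≤ C := intervalIntegral.integral_nonneg hT0 (fun s _ => hg0 s)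
  have hFnn : 0 ≤ ∫ s in (0:ℝ)..t, g s :=
    intervalIntegral.integral_nonneg ht0 (fun s _ => hg0 s)
  have hkey : Real.exp (-(γ * Θ t)) * (∫ s in (0:ℝ)..t, g s) < ε := by
    rw [hsplit, mul_add]
    have h2 : Real.exp (-(γ * Θ t)) * (∫ s in T..t, g s)
        ≤ ∫ s in T..t, |θ' s| := by
      calc Real.exp (-(γ * Θ t)) * (∫ s in T..t, g s)
          ≤ Real.exp (-(γ * Θ t)) * (Real.exp (γ * Θ t) * ∫ s in T..t, |θ' s|) :=
            mul_le_mul_of_nonneg_left hbound (Real.exp_pos _).le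
        _ = ∫ s in T..t, |θ' s| := by
            rw [← mul_assoc, ← Real.exp_add]; simp
    have h3 := htail t ht
    linarith
  have hnn : 0 ≤ Real.exp (-(γ * Θ t)) * (∫ s in (0:ℝ)..t, g s) :=
    mul_nonneg (Real.exp_pos _).le hFnn
  calc ‖Real.exp (-(γ * Θ t)) * ∫ s in (0:ℝ)..t, g s‖
      = Real.exp (-(γ * Θ t)) * ∫ s in (0:ℝ)..t, g s := by
        rw [Real.norm_eq_abs, abs_of_nonneg hnn]
    _ < ε := hkey
end

section
/- Let θ : [0,∞) → (0,∞) be absolutely continuous with ∫₀^∞ θ(t) dt = ∞ and θ'(t)/θ(t) → 0 as t → ∞, and let γ > 0. Define Θ(t) = ∫₀ᵗ θ(s) ds and r(t) = e^{−γΘ(t)} ∫₀ᵗ e^{γΘ(s)} |θ'(s)| ds. Then r(t) → 0 as t → ∞. -/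
open MeasureTheory Filter Topology

noncomputable def Th (θ : ℝ → ℝ) (t : ℝ) : ℝ := ∫ s in (0:ℝ)..t, θ s

theorem stmt8 (θ θ' : ℝ → ℝ) (γ : ℝ) (hγ : 0 < γ)
    (hθpos : ∀ t, 0 ≤ t → 0 < θ t)
    (hθc : ContinuousOn θ (Set.Ici 0))
    (hθ'int : ∀ t, 0 ≤ t → IntervalIntegrable θ' volume 0 t)
    (hFTC : ∀ t, 0 ≤ t → θ t = θ 0 + ∫ s in (0:ℝ)..t, θ' s)
    (hdiv : Tendsto (fun t => ∫ s in (0:ℝ)..t, θ s) atTop atTop)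
    (hratio : Tendsto (fun t => θ' t / θ t) atTop (𝓝 0)) :
    Tendsto (fun t =>
      Real.exp (-(γ * ∫ s in (0:ℝ)..t, θ s)) *
        ∫ s in (0:ℝ)..t, Real.exp (γ * ∫ τ in (0:ℝ)..s, θ τ) * |θ' s|)
      atTop (𝓝 0) := by
  have hθint : ∀ a b : ℝ, 0 ≤ a → 0 ≤ b → IntervalIntegrable θ volume a b := by
    intro a b ha hb
    apply ContinuousOn.intervalIntegrable
    apply hθc.mono
    intro x hx
    exact le_trans (le_min ha hb) hx.1
  have hΘderiv : ∀ s : ℝ, 0 < s → HasDerivAt (Th θ) (θ s) s := by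
    intro s hs
    have h1 : IntervalIntegrable θ volume 0 s := hθint 0 s le_rfl hs.le
    have h2 : ContinuousAt θ s :=
      hθc.continuousAt (mem_of_superset (Ioi_mem_nhds hs) Set.Ioi_subset_Ici_self)
    have h3 : StronglyMeasurableAtFilter θ (𝓝 s) :=
      ⟨Set.Ioi 0, Ioi_mem_nhds hs,
        ((hθc.mono Set.Ioi_subset_Ici_self).aestronglyMeasurable measurableSet_Ioi)⟩
    exact intervalIntegral.integral_hasDerivAt_right h1 h3 h2
  have hE : ∀ s : ℝ, 0 < s →
      HasDerivAt (fun u => Real.exp (γ * Th θ u)) (Real.exp (γ * Th θ s) * (γ * θ s)) s :=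
    fun s hs => ((hΘderiv s hs).const_mul γ).exp
  have hΘc : ∀ b : ℝ, 0 ≤ b → ContinuousOn (Th θ) (Set.Icc 0 b) := by
    intro b hb
    have h := intervalIntegral.continuousOn_primitive_interval
      (f := θ) (a := 0) (b := b) (μ := volume)
      (by rw [Set.uIcc_of_le hb]; exact (hθc.mono (fun x hx => hx.1)).integrableOn_Icc)
    rw [Set.uIcc_of_le hb] at h
    exact h
  have hEcOn : ∀ b : ℝ, 0 ≤ b → ContinuousOn (fun u => Real.exp (γ * Th θ u)) (Set.Icc 0 b) :=
    fun b hb => Real.continuous_exp.comp_continuousOn (continuousOn_const.mul (hΘc b hb))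
  have hprodint : ∀ a b : ℝ, 0 ≤ a → a ≤ b →
      IntervalIntegrable (fun s => Real.exp (γ * Th θ s) * |θ' s|) volume a b := by
    intro a b ha hab
    have hb : (0:ℝ) ≤ b := ha.trans hab
    have hθ'ab : IntervalIntegrable θ' volume a b :=
      (hθ'int a ha).symm.trans (hθ'int b hb)
    have hθ'abs : IntervalIntegrable (fun s => |θ' s|) volume a b := by
      simpa [Real.norm_eq_abs] using hθ'ab.norm
    apply hθ'abs.continuousOn_mul
    apply (hEcOn b hb).mono
    rw [Set.uIcc_of_le hab]
    exact Set.Icc_subset_Icc_left ha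
  show Tendsto (fun t => Real.exp (-(γ * Th θ t)) *
      ∫ s in (0:ℝ)..t, Real.exp (γ * Th θ s) * |θ' s|) atTop (𝓝 0)
  rw [Metric.tendsto_nhds]
  intro ε hε
  set ε' := ε / 3 with hε'def
  have hε'pos : 0 < ε' := by positivity
  have hrb := Metric.tendsto_nhds.mp hratio (γ * ε') (by positivity)
  rw [eventually_atTop] at hrb
  obtain ⟨T₀, hT₀⟩ := hrb
  set T := max T₀ 1 with hTdef
  have hT1 : (1:ℝ) ≤ T := le_max_right _ _
  have hT0 : (0:ℝ) ≤ T := by linarith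
  have hbound : ∀ s, T ≤ s → |θ' s| ≤ γ * ε' * θ s := by
    intro s hs
    have hs0 : (0:ℝ) < s := lt_of_lt_of_le one_pos (hT1.trans hs)
    have h1 := hT₀ s ((le_max_left _ _).trans hs)
    have hθs := hθpos s hs0.le
    rw [Real.dist_eq, sub_zero, abs_div, abs_of_pos hθs, div_lt_iff₀ hθs] at h1
    linarith
  set C := ∫ s in (0:ℝ)..T, Real.exp (γ * Th θ s) * |θ' s| with hCdef
  -- exp(-(γ Θ t)) * C → 0
  have h1 : Tendsto (fun t => γ * Th θ t) atTop atTop := hdiv.const_mul_atTop hγ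
  have h2 : Tendsto (fun t => -(γ * Th θ t)) atTop atBot := tendsto_neg_atTop_atBot.comp h1
  have h3 : Tendsto (fun t => Real.exp (-(γ * Th θ t))) atTop (𝓝 0) :=
    Real.tendsto_exp_atBot.comp h2
  have hexpC : Tendsto (fun t => Real.exp (-(γ * Th θ t)) * C) atTop (𝓝 0) := by
    simpa using h3.mul_const C
  have hCsmall := Metric.tendsto_nhds.mp hexpC ε' hε'pos
  filter_upwards [eventually_ge_atTop T, hCsmall] with t ht hCt
  have ht0 : (0:ℝ) ≤ t := hT0.trans ht
  have hsub : Set.Icc T t ⊆ Set.Icc 0 t := Set.Icc_subset_Icc_left hT0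
  have hθcont : ContinuousOn θ (Set.Icc 0 t) := hθc.mono (fun x hx => hx.1)
  have hcont2 : ContinuousOn (fun s => Real.exp (γ * Th θ s) * (γ * ε' * θ s)) (Set.Icc T t) :=
    ((hEcOn t ht0).mono hsub).mul (continuousOn_const.mul (hθcont.mono hsub))
  have hcont3 : ContinuousOn (fun s => Real.exp (γ * Th θ s) * (γ * θ s)) (Set.Icc T t) :=
    ((hEcOn t ht0).mono hsub).mul (continuousOn_const.mul (hθcont.mono hsub))
  have hint2 : IntervalIntegrable (fun s => Real.exp (γ * Th θ s) * (γ * ε' * θ s)) volume T t :=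
    ContinuousOn.intervalIntegrable (by rw [Set.uIcc_of_le ht]; exact hcont2)
  have hint3 : IntervalIntegrable (fun s => Real.exp (γ * Th θ s) * (γ * θ s)) volume T t :=
    ContinuousOn.intervalIntegrable (by rw [Set.uIcc_of_le ht]; exact hcont3)
  have hFTCexp : ∫ s in T..t, Real.exp (γ * Th θ s) * (γ * θ s)
      = Real.exp (γ * Th θ t) - Real.exp (γ * Th θ T) := by
    apply intervalIntegral.integral_eq_sub_of_hasDerivAt _ hint3
    intro x hx
    rw [Set.uIcc_of_le ht] at hx
    exact hE x (lt_of_lt_of_le one_pos (hT1.trans hx.1))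
  have hIT : (∫ s in T..t, Real.exp (γ * Th θ s) * |θ' s|) ≤ ε' * Real.exp (γ * Th θ t) := by
    calc (∫ s in T..t, Real.exp (γ * Th θ s) * |θ' s|)
        ≤ ∫ s in T..t, Real.exp (γ * Th θ s) * (γ * ε' * θ s) := by
          apply intervalIntegral.integral_mono_on ht (hprodint T t hT0 ht) hint2
          intro s hs
          exact mul_le_mul_of_nonneg_left (hbound s hs.1) (Real.exp_pos _).le
      _ = ε' * ∫ s in T..t, Real.exp (γ * Th θ s) * (γ * θ s) := by
          rw [← intervalIntegral.integral_const_mul]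
          apply intervalIntegral.integral_congr
          intro s _
          ring
      _ = ε' * (Real.exp (γ * Th θ t) - Real.exp (γ * Th θ T)) := by rw [hFTCexp]
      _ ≤ ε' * Real.exp (γ * Th θ t) := by
          nlinarith [Real.exp_pos (γ * Th θ T)]
  have hsplit : (∫ s in (0:ℝ)..t, Real.exp (γ * Th θ s) * |θ' s|)
      = C + ∫ s in T..t, Real.exp (γ * Th θ s) * |θ' s| :=
    (intervalIntegral.integral_add_adjacent_intervals (hprodint 0 T le_rfl hT0)
      (hprodint T t hT0 ht)).symm
  have hrt0 : 0 ≤ Real.exp (-(γ * Th θ t)) *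
      ∫ s in (0:ℝ)..t, Real.exp (γ * Th θ s) * |θ' s| := by
    apply mul_nonneg (Real.exp_nonneg _)
    apply intervalIntegral.integral_nonneg ht0
    intro s _
    exact mul_nonneg (Real.exp_nonneg _) (abs_nonneg _)
  have hexpmul : Real.exp (-(γ * Th θ t)) * (ε' * Real.exp (γ * Th θ t)) = ε' := by
    rw [Real.exp_neg]
    field_simp
  have hCt' : Real.exp (-(γ * Th θ t)) * C < ε' := by
    have := hCt
    rw [Real.dist_eq, sub_zero] at this
    exact lt_of_le_of_lt (le_abs_self _) this
  have hrt : Real.exp (-(γ * Th θ t)) *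
      (∫ s in (0:ℝ)..t, Real.exp (γ * Th θ s) * |θ' s|)
      ≤ Real.exp (-(γ * Th θ t)) * C + ε' := by
    rw [hsplit, mul_add]
    have h4 := mul_le_mul_of_nonneg_left hIT (Real.exp_nonneg (-(γ * Th θ t)))
    rw [hexpmul] at h4
    linarith
  rw [Real.dist_eq, sub_zero, abs_of_nonneg hrt0]
  linarith
end

section
/- Let x : [0,∞) → C be a C¹ solution of x'(t) + x(t) = θ(t) f(x(t)) + (1 − θ(t)) T(x(t)), and suppose M := sup_{s ≥ 0} ( ‖f(x(s))‖ + ‖T(x(s))‖ ) < ∞, θ : [0,∞) → (0,1] is absolutely continuous, and γ = 1 − α. Then for every t ≥ 0, ‖x'(t)‖ ≤ e^{−γΘ(t)} ‖x'(0)‖ + M e^{−γΘ(t)} ∫₀ᵗ e^{γΘ(s)} |θ'(s)| ds, where Θ(t) = ∫₀ᵗ θ(s) ds. -/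
open MeasureTheory Set Filter Topology
open scoped InnerProductSpace

/-!
Since `θ` is only absolutely continuous, `x'` need not be differentiable, so one works with the
increments `u = x (· + h) - x`. The equation, the contraction `f` and the nonexpansive `T` give
`⟪u', u⟫ ≤ -γ θ (· + h) ‖u‖² + M |θ (· + h) - θ| ‖u‖`, and the integrating factor
`exp (γ Θ (· + h))` turns this into a bound on `‖u t‖` by `‖u 0‖` plus an integral of the
increments of `θ`. Bounding `|θ (s + h) - θ s|` by `∫ₛ^{s+h} |θ'|` and integrating over `s` costs
exactly a factor `h`, so dividing by `h` and letting `h → 0⁺` gives the estimate for `x'`.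
-/

theorem norm_le_add_integral_of_inner_deriv_le {E : Type*} [NormedAddCommGroup E]
    [InnerProductSpace ℝ E] {y y' : ℝ → E} {g : ℝ → ℝ} {a b : ℝ} (hab : a ≤ b)
    (hy : ContinuousOn y (Icc a b)) (hy' : ∀ s ∈ Ioo a b, HasDerivAt y (y' s) s)
    (hg : IntegrableOn g (Icc a b)) (hg0 : ∀ s ∈ Ioo a b, 0 ≤ g s)
    (hinner : ∀ s ∈ Ioo a b, ⟪y' s, y s⟫_ℝ ≤ g s * ‖y s‖) :
    ‖y b‖ ≤ ‖y a‖ + ∫ s in a..b, g s := by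
  refine le_of_forall_pos_le_add fun ε hε => ?_
  -- `‖y‖` need not be differentiable where `y` vanishes; `√(‖y‖² + ε²)` always is.
  set φ : ℝ → ℝ := fun s => √(‖y s‖ ^ 2 + ε ^ 2)
  have hφ_pos : ∀ s, 0 < φ s := fun s => Real.sqrt_pos.2 (by positivity)
  have hnorm_le : ∀ s, ‖y s‖ ≤ φ s := fun s =>
    Real.le_sqrt_of_sq_le (le_add_of_nonneg_right (sq_nonneg ε))
  have hφ' : ∀ s ∈ Ioo a b, HasDerivAt φ (⟪y' s, y s⟫_ℝ / φ s) s := fun s hs => by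
    convert ((hy' s hs).norm_sq.add_const (ε ^ 2)).sqrt (by positivity) using 1
    rw [real_inner_comm, mul_div_mul_left _ _ two_ne_zero]
  have hφ_le : ∀ s ∈ Ioo a b, ⟪y' s, y s⟫_ℝ / φ s ≤ g s := fun s hs => by
    rw [div_le_iff₀ (hφ_pos s)]
    exact (hinner s hs).trans (mul_le_mul_of_nonneg_left (hnorm_le s) (hg0 s hs))
  have hφa : φ a ≤ ‖y a‖ + ε :=
    Real.sqrt_le_iff.2 ⟨by positivity, by nlinarith [norm_nonneg (y a)]⟩
  have := intervalIntegral.sub_le_integral_of_hasDeriv_right_of_le (g := φ) hab (by fun_prop)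
    (fun s hs => (hφ' s hs).hasDerivWithinAt) hg hφ_le
  linarith [hnorm_le b]

theorem exp_mul_norm_le_of_inner_deriv_le {E : Type*} [NormedAddCommGroup E]
    [InnerProductSpace ℝ E] {u u' : ℝ → E} {w w' g : ℝ → ℝ} {a b : ℝ} (hab : a ≤ b)
    (hu : ContinuousOn u (Icc a b)) (hw : ContinuousOn w (Icc a b))
    (hu' : ∀ s ∈ Ioo a b, HasDerivAt u (u' s) s) (hw' : ∀ s ∈ Ioo a b, HasDerivAt w (w' s) s)
    (hg : IntegrableOn (fun s => Real.exp (w s) * g s) (Icc a b))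
    (hg0 : ∀ s ∈ Ioo a b, 0 ≤ g s)
    (hinner : ∀ s ∈ Ioo a b, ⟪u' s, u s⟫_ℝ ≤ -w' s * ‖u s‖ ^ 2 + g s * ‖u s‖) :
    Real.exp (w b) * ‖u b‖ ≤ Real.exp (w a) * ‖u a‖ + ∫ s in a..b, Real.exp (w s) * g s := by
  have hnorm : ∀ s, ‖Real.exp (w s) • u s‖ = Real.exp (w s) * ‖u s‖ := fun s => by
    rw [norm_smul, Real.norm_of_nonneg (Real.exp_pos _).le]
  have := norm_le_add_integral_of_inner_deriv_le (y := fun s => Real.exp (w s) • u s)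
    (y' := fun s => Real.exp (w s) • u' s + (Real.exp (w s) * w' s) • u s) hab
    (hw.rexp.smul hu) (fun s hs => (hw' s hs).exp.smul (hu' s hs)) hg
    (fun s hs => mul_nonneg (Real.exp_pos _).le (hg0 s hs)) (fun s hs => ?_)
  · simpa only [hnorm] using this
  rw [hnorm, inner_add_left, real_inner_smul_left, real_inner_smul_left, real_inner_smul_right,
    real_inner_smul_right, real_inner_self_eq_norm_sq]
  have := mul_le_mul_of_nonneg_left (hinner s hs) (mul_self_nonneg (Real.exp (w s)))
  linarith

theorem inner_convexCombination_sub_le {E : Type*} [NormedAddCommGroup E] [InnerProductSpace ℝ E]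
    {f T : E → E} {α θ₁ θ₂ : ℝ} {a b : E} (hf : ‖f a - f b‖ ≤ α * ‖a - b‖)
    (hT : ‖T a - T b‖ ≤ ‖a - b‖) (hθ₁0 : 0 ≤ θ₁) (hθ₁1 : θ₁ ≤ 1) :
    ⟪(θ₁ • f a + (1 - θ₁) • T a - a) - (θ₂ • f b + (1 - θ₂) • T b - b), a - b⟫_ℝ ≤
      -((1 - α) * θ₁) * ‖a - b‖ ^ 2 + |θ₁ - θ₂| * ‖f b - T b‖ * ‖a - b‖ := by
  have hsplit : (θ₁ • f a + (1 - θ₁) • T a - a) - (θ₂ • f b + (1 - θ₂) • T b - b) =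
      θ₁ • (f a - f b) + (1 - θ₁) • (T a - T b) + (θ₁ - θ₂) • (f b - T b) - (a - b) := by
    module
  have hf' : ⟪f a - f b, a - b⟫_ℝ ≤ α * ‖a - b‖ ^ 2 :=
    (real_inner_le_norm _ _).trans (by rw [sq, ← mul_assoc]; gcongr)
  have hT' : ⟪T a - T b, a - b⟫_ℝ ≤ ‖a - b‖ ^ 2 :=
    (real_inner_le_norm _ _).trans (by rw [sq]; gcongr)
  have hdiff : (θ₁ - θ₂) * ⟪f b - T b, a - b⟫_ℝ ≤ |θ₁ - θ₂| * (‖f b - T b‖ * ‖a - b‖) :=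
    (le_abs_self _).trans (by rw [abs_mul]; gcongr; exact abs_real_inner_le_norm _ _)
  rw [hsplit, inner_sub_left, inner_add_left, inner_add_left, real_inner_smul_left,
    real_inner_smul_left, real_inner_smul_left, real_inner_self_eq_norm_sq]
  nlinarith [mul_le_mul_of_nonneg_left hf' hθ₁0, mul_le_mul_of_nonneg_left hT' (sub_nonneg.2 hθ₁1)]

theorem integral_comp_add_sub_le_of_monotoneOn {Φ : ℝ → ℝ} {a b h : ℝ} (hab : a ≤ b)
    (hh : 0 ≤ h) (hΦ : MonotoneOn Φ (Icc a (b + h))) :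
    ∫ s in a..b, (Φ (s + h) - Φ s) ≤ h * (Φ (b + h) - Φ a) := by
  have hint : ∀ c ∈ Icc a (b + h), ∀ d ∈ Icc a (b + h), IntervalIntegrable Φ volume c d :=
    fun c hc d hd => (hΦ.mono (uIcc_subset_Icc hc hd)).intervalIntegrable
  have ha : a ∈ Icc a (b + h) := ⟨le_rfl, by linarith⟩
  have hah : a + h ∈ Icc a (b + h) := ⟨by linarith, by linarith⟩
  have hb : b ∈ Icc a (b + h) := ⟨hab, by linarith⟩
  have hbh : b + h ∈ Icc a (b + h) := ⟨by linarith, le_rfl⟩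
  have hupper : ∫ s in b..b + h, Φ s ≤ h * Φ (b + h) := by
    simpa using intervalIntegral.integral_mono_on (by linarith) (hint b hb _ hbh)
      intervalIntegrable_const fun s hs => hΦ ⟨hab.trans hs.1, hs.2⟩ hbh hs.2
  have hlower : h * Φ a ≤ ∫ s in a..a + h, Φ s := by
    simpa using intervalIntegral.integral_mono_on (by linarith) intervalIntegrable_const
      (hint a ha _ hah) fun s hs => hΦ ha ⟨hs.1, by linarith [hs.2]⟩ hs.1
  -- `∫ₐᵇ (Φ (s + h) - Φ s) = ∫_b^{b+h} Φ - ∫ₐ^{a+h} Φ`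
  rw [intervalIntegral.integral_sub ?_ (hint a ha b hb), intervalIntegral.integral_comp_add_right,
    intervalIntegral.integral_interval_sub_interval_comm' (hint _ hah _ hbh) (hint a ha b hb)
      (hint _ hah a ha)]
  · linarith
  · simpa using (hint _ hah _ hbh).comp_add_right h

section Primitive

variable {g : ℝ → ℝ}

theorem intervalIntegrable_of_continuousOn_Ici (hg : ContinuousOn g (Ici 0)) {t : ℝ}
    (ht : 0 ≤ t) : IntervalIntegrable g volume 0 t :=
  (hg.mono fun s hs => by rw [uIcc_of_le ht] at hs; exact hs.1).intervalIntegrable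

theorem continuousOn_primitive_Ici (hg : ∀ t, 0 ≤ t → IntervalIntegrable g volume 0 t) :
    ContinuousOn (fun t => ∫ s in (0:ℝ)..t, g s) (Ici 0) := by
  intro t ht
  have hIcc := intervalIntegral.continuousOn_primitive_interval' (hg (t + 1) (by linarith [ht.out]))
    left_mem_uIcc
  rw [uIcc_of_le (by linarith [ht.out])] at hIcc
  refine (hIcc t ⟨ht, by linarith⟩).mono_of_mem_nhdsWithin ?_
  exact mem_nhdsWithin.2 ⟨Iio (t + 1), isOpen_Iio, by simp, fun s hs => ⟨hs.2, hs.1.le⟩⟩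

theorem monotoneOn_primitive_Ici (hg : ∀ t, 0 ≤ t → IntervalIntegrable g volume 0 t)
    (hg0 : ∀ s, 0 ≤ s → 0 ≤ g s) : MonotoneOn (fun t => ∫ s in (0:ℝ)..t, g s) (Ici 0) :=
  fun _ ha b _ hab => intervalIntegral.integral_mono_interval le_rfl ha hab
    ((ae_restrict_iff' measurableSet_Ioc).2 (.of_forall fun s hs => hg0 s hs.1.le))
    (hg b (ha.out.trans hab))

theorem hasDerivAt_primitive_of_continuousOn_Ici (hg : ContinuousOn g (Ici 0)) {r : ℝ}
    (hr : 0 < r) : HasDerivAt (fun t => ∫ s in (0:ℝ)..t, g s) (g r) r :=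
  intervalIntegral.integral_hasDerivAt_right (intervalIntegrable_of_continuousOn_Ici hg hr.le)
    ((hg.mono Ioi_subset_Ici_self).stronglyMeasurableAtFilter isOpen_Ioi r hr)
    (hg.continuousAt (Ici_mem_nhds hr))

theorem continuousOn_Ici_of_eq_add_integral {F : ℝ → ℝ}
    (hg : ∀ t, 0 ≤ t → IntervalIntegrable g volume 0 t)
    (hF : ∀ t, 0 ≤ t → F t = F 0 + ∫ s in (0:ℝ)..t, g s) : ContinuousOn F (Ici 0) :=
  (continuousOn_const.add (continuousOn_primitive_Ici hg)).congr hF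

theorem primitive_le_add_sub_of_le_one (hg : ContinuousOn g (Ici 0))
    (hg1 : ∀ s, 0 ≤ s → g s ≤ 1) {a b : ℝ} (ha : 0 ≤ a) (hab : a ≤ b) :
    ∫ s in (0:ℝ)..b, g s ≤ (∫ s in (0:ℝ)..a, g s) + (b - a) := by
  have hint : ∀ {r : ℝ}, 0 ≤ r → IntervalIntegrable g volume 0 r :=
    intervalIntegrable_of_continuousOn_Ici hg
  have hle : ∫ s in a..b, g s ≤ ∫ _ in a..b, (1:ℝ) :=
    intervalIntegral.integral_mono_on hab ((hint ha).symm.trans (hint (ha.trans hab)))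
      intervalIntegrable_const fun s hs => hg1 s (ha.trans hs.1)
  rw [← intervalIntegral.integral_interval_sub_left (hint (ha.trans hab)) (hint ha)] at hle
  simp only [intervalIntegral.integral_const, smul_eq_mul, mul_one] at hle
  linarith

theorem exp_mul_primitive_add_le (hg : ContinuousOn g (Ici 0)) (hg1 : ∀ s, 0 ≤ s → g s ≤ 1)
    {γ : ℝ} (hγ : 0 ≤ γ) {s h : ℝ} (hs : 0 ≤ s) (hh : 0 ≤ h) :
    Real.exp (γ * ∫ τ in (0:ℝ)..s + h, g τ) ≤
      Real.exp (γ * h) * Real.exp (γ * ∫ τ in (0:ℝ)..s, g τ) := by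
  rw [← Real.exp_add, Real.exp_le_exp]
  nlinarith [mul_le_mul_of_nonneg_left (primitive_le_add_sub_of_le_one hg hg1 hs
    (by linarith : s ≤ s + h)) hγ]

theorem tendsto_comp_add_nhdsGT_of_continuousOn_Ici {F : ℝ → ℝ} (hF : ContinuousOn F (Ici 0))
    {t : ℝ} (ht : 0 ≤ t) : Tendsto (fun h => F (t + h)) (𝓝[>] 0) (𝓝 (F t)) := by
  refine (hF t ht).tendsto.comp (tendsto_nhdsWithin_of_tendsto_nhds_of_eventually_within _ ?_ ?_)
  · exact ((continuous_const_add t).tendsto' 0 t (add_zero t)).mono_left nhdsWithin_le_nhds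
  · filter_upwards [self_mem_nhdsWithin] with h hh using by simp only [mem_Ici]; linarith [hh.out]

end Primitive

theorem mul_abs_sub_le_integral {θ θ' ρ : ℝ → ℝ}
    (hθ'int : ∀ t, 0 ≤ t → IntervalIntegrable θ' volume 0 t)
    (hθFTC : ∀ t, 0 ≤ t → θ t = θ 0 + ∫ s in (0:ℝ)..t, θ' s) (hρ : ContinuousOn ρ (Ici 0))
    (hρ0 : ∀ s, 0 ≤ s → 0 ≤ ρ s) (hρmono : MonotoneOn ρ (Ici 0)) {s h : ℝ} (hs : 0 ≤ s)
    (hh : 0 ≤ h) : ρ s * |θ (s + h) - θ s| ≤ ∫ τ in s..s + h, ρ τ * |θ' τ| := by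
  have hsh : 0 ≤ s + h := by linarith
  have hθ'int' : IntervalIntegrable θ' volume s (s + h) := (hθ'int s hs).symm.trans (hθ'int _ hsh)
  have hθinc : θ (s + h) - θ s = ∫ τ in s..s + h, θ' τ := by
    rw [hθFTC _ hsh, hθFTC s hs,
      ← intervalIntegral.integral_interval_sub_left (hθ'int _ hsh) (hθ'int s hs)]
    ring
  rw [hθinc]
  calc ρ s * |∫ τ in s..s + h, θ' τ| ≤ ρ s * ∫ τ in s..s + h, |θ' τ| := by
        gcongr
        · exact hρ0 s hs
        · exact intervalIntegral.abs_integral_le_integral_abs (by linarith)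
    _ = ∫ τ in s..s + h, ρ s * |θ' τ| := (intervalIntegral.integral_const_mul _ _).symm
    _ ≤ ∫ τ in s..s + h, ρ τ * |θ' τ| := by
        refine intervalIntegral.integral_mono_on (by linarith) (hθ'int'.abs.const_mul _)
          (hθ'int'.abs.continuousOn_mul (hρ.mono ?_)) fun τ hτ =>
            mul_le_mul_of_nonneg_right (hρmono hs (hs.trans hτ.1) hτ.1) (abs_nonneg _)
        rw [uIcc_of_le (by linarith)]
        exact fun τ hτ => hs.trans hτ.1

theorem integral_mul_abs_sub_le {θ θ' ρ : ℝ → ℝ}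
    (hθ'int : ∀ t, 0 ≤ t → IntervalIntegrable θ' volume 0 t)
    (hθFTC : ∀ t, 0 ≤ t → θ t = θ 0 + ∫ s in (0:ℝ)..t, θ' s) (hρ : ContinuousOn ρ (Ici 0))
    (hρ0 : ∀ s, 0 ≤ s → 0 ≤ ρ s) (hρmono : MonotoneOn ρ (Ici 0)) {t h : ℝ} (ht : 0 ≤ t)
    (hh : 0 ≤ h) :
    ∫ s in (0:ℝ)..t, ρ s * |θ (s + h) - θ s| ≤ h * ∫ s in (0:ℝ)..t + h, ρ s * |θ' s| := by
  set Φ : ℝ → ℝ := fun t => ∫ s in (0:ℝ)..t, ρ s * |θ' s|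
  have hθc : ContinuousOn θ (Ici 0) := continuousOn_Ici_of_eq_add_integral hθ'int hθFTC
  have hρθ'int : ∀ t, 0 ≤ t → IntervalIntegrable (fun s => ρ s * |θ' s|) volume 0 t :=
    fun t ht => (hθ'int t ht).abs.continuousOn_mul
      (hρ.mono fun s hs => by rw [uIcc_of_le ht] at hs; exact hs.1)
  have hΦc : ContinuousOn Φ (Ici 0) := continuousOn_primitive_Ici hρθ'int
  have hshift : MapsTo (· + h) (Icc 0 t) (Ici 0) := fun s hs => by
    simp only [mem_Ici]; linarith [hs.1]
  calc ∫ s in (0:ℝ)..t, ρ s * |θ (s + h) - θ s|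
      ≤ ∫ s in (0:ℝ)..t, (Φ (s + h) - Φ s) := by
        refine intervalIntegral.integral_mono_on ht (ContinuousOn.intervalIntegrable_of_Icc ht ?_)
          (ContinuousOn.intervalIntegrable_of_Icc ht ?_) fun s hs => ?_
        · exact (hρ.mono Icc_subset_Ici_self).mul
            ((hθc.comp (continuousOn_id.add continuousOn_const) hshift).sub
              (hθc.mono Icc_subset_Ici_self)).abs
        · exact (hΦc.comp (continuousOn_id.add continuousOn_const) hshift).sub
            (hΦc.mono Icc_subset_Ici_self)
        · rw [intervalIntegral.integral_interval_sub_left (hρθ'int _ (by linarith [hs.1]))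
            (hρθ'int s hs.1)]
          exact mul_abs_sub_le_integral hθ'int hθFTC hρ hρ0 hρmono hs.1 hh
    _ ≤ h * (Φ (t + h) - Φ 0) := integral_comp_add_sub_le_of_monotoneOn ht hh
        ((monotoneOn_primitive_Ici hρθ'int fun s hs => mul_nonneg (hρ0 s hs) (abs_nonneg _)).mono
          Icc_subset_Ici_self)
    _ = h * Φ (t + h) := by simp [Φ]

theorem inner_deriv_sub_le {H : Type*} [NormedAddCommGroup H] [InnerProductSpace ℝ H]
    {C : Set H} {f T : H → H} {α M : ℝ}
    (hf : ∀ x ∈ C, ∀ y ∈ C, ‖f x - f y‖ ≤ α * ‖x - y‖)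
    (hT : ∀ x ∈ C, ∀ y ∈ C, ‖T x - T y‖ ≤ ‖x - y‖)
    {θ : ℝ → ℝ} (hθ : ∀ t, 0 ≤ t → 0 ≤ θ t ∧ θ t ≤ 1) {x x' : ℝ → H}
    (hode : ∀ t, 0 ≤ t → x' t + x t = θ t • f (x t) + (1 - θ t) • T (x t))
    (hxC : ∀ t, 0 ≤ t → x t ∈ C) (hM : ∀ t, 0 ≤ t → ‖f (x t) - T (x t)‖ ≤ M)
    {s h : ℝ} (hs : 0 ≤ s) (hh : 0 ≤ h) :
    ⟪x' (s + h) - x' s, x (s + h) - x s⟫_ℝ ≤ -((1 - α) * θ (s + h)) * ‖x (s + h) - x s‖ ^ 2 +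
      M * |θ (s + h) - θ s| * ‖x (s + h) - x s‖ := by
  have hsh : 0 ≤ s + h := by linarith
  rw [eq_sub_of_add_eq (hode _ hsh), eq_sub_of_add_eq (hode s hs)]
  have hMs := mul_le_mul_of_nonneg_left (hM s hs)
    (mul_nonneg (abs_nonneg (θ (s + h) - θ s)) (norm_nonneg (x (s + h) - x s)))
  have := inner_convexCombination_sub_le (hf _ (hxC _ hsh) _ (hxC s hs))
    (hT _ (hxC _ hsh) _ (hxC s hs)) (hθ _ hsh).1 (hθ _ hsh).2 (θ₂ := θ s)
  linarith

theorem exp_mul_norm_sub_le_add_integral {H : Type*} [NormedAddCommGroup H]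
    [InnerProductSpace ℝ H] {C : Set H} {f T : H → H} {α M : ℝ}
    (hf : ∀ x ∈ C, ∀ y ∈ C, ‖f x - f y‖ ≤ α * ‖x - y‖)
    (hT : ∀ x ∈ C, ∀ y ∈ C, ‖T x - T y‖ ≤ ‖x - y‖)
    {θ : ℝ → ℝ} (hθ : ∀ t, 0 ≤ t → 0 ≤ θ t ∧ θ t ≤ 1) (hθc : ContinuousOn θ (Ici 0))
    {x x' : ℝ → H} (hx' : ∀ t, 0 ≤ t → HasDerivAt x (x' t) t)
    (hode : ∀ t, 0 ≤ t → x' t + x t = θ t • f (x t) + (1 - θ t) • T (x t))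
    (hxC : ∀ t, 0 ≤ t → x t ∈ C) (hM : ∀ t, 0 ≤ t → ‖f (x t) - T (x t)‖ ≤ M)
    {t h : ℝ} (ht : 0 ≤ t) (hh : 0 < h) :
    Real.exp ((1 - α) * ∫ s in (0:ℝ)..t + h, θ s) * ‖x (t + h) - x t‖ ≤
      Real.exp ((1 - α) * ∫ s in (0:ℝ)..h, θ s) * ‖x h - x 0‖ +
        ∫ s in (0:ℝ)..t, Real.exp ((1 - α) * ∫ τ in (0:ℝ)..s + h, θ τ) *
          (M * |θ (s + h) - θ s|) := by
  set Θ : ℝ → ℝ := fun r => ∫ s in (0:ℝ)..r, θ s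
  have hu' : ∀ s, 0 ≤ s → HasDerivAt (fun s => x (s + h) - x s) (x' (s + h) - x' s) s :=
    fun s hs => ((hx' (s + h) (by linarith)).comp_add_const s h).sub (hx' s hs)
  have hw' : ∀ s, 0 ≤ s →
      HasDerivAt (fun s => (1 - α) * Θ (s + h)) ((1 - α) * θ (s + h)) s :=
    fun s hs => ((hasDerivAt_primitive_of_continuousOn_Ici hθc (by linarith)).comp_add_const
      s h).const_mul _
  have hw : ContinuousOn (fun s => (1 - α) * Θ (s + h)) (Icc 0 t) :=
    fun s hs => (hw' s hs.1).continuousAt.continuousWithinAt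
  have hshift : MapsTo (· + h) (Icc 0 t) (Ici 0) := fun s hs => by
    simp only [mem_Ici]; linarith [hs.1]
  have hΔc : ContinuousOn (fun s => |θ (s + h) - θ s|) (Icc 0 t) :=
    ((hθc.comp (continuousOn_id.add continuousOn_const) hshift).sub
      (hθc.mono Icc_subset_Ici_self)).abs
  simpa using exp_mul_norm_le_of_inner_deriv_le ht
    (fun s hs => (hu' s hs.1).continuousAt.continuousWithinAt) hw
    (fun s hs => hu' s hs.1.le) (fun s hs => hw' s hs.1.le)
    (hw.rexp.mul (continuousOn_const.mul hΔc)).integrableOn_Icc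
    (fun s _ => mul_nonneg ((norm_nonneg _).trans (hM 0 le_rfl)) (abs_nonneg _))
    fun s hs => inner_deriv_sub_le hf hT hθ hode hxC hM hs.1.le hh.le

theorem exp_mul_norm_sub_le {H : Type*} [NormedAddCommGroup H] [InnerProductSpace ℝ H]
    {C : Set H} {f T : H → H} {α M : ℝ} (hα1 : α < 1)
    (hf : ∀ x ∈ C, ∀ y ∈ C, ‖f x - f y‖ ≤ α * ‖x - y‖)
    (hT : ∀ x ∈ C, ∀ y ∈ C, ‖T x - T y‖ ≤ ‖x - y‖)
    {θ θ' : ℝ → ℝ} (hθ : ∀ t, 0 ≤ t → 0 ≤ θ t ∧ θ t ≤ 1)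
    (hθ'int : ∀ t, 0 ≤ t → IntervalIntegrable θ' volume 0 t)
    (hθFTC : ∀ t, 0 ≤ t → θ t = θ 0 + ∫ s in (0:ℝ)..t, θ' s)
    {x x' : ℝ → H} (hx' : ∀ t, 0 ≤ t → HasDerivAt x (x' t) t)
    (hode : ∀ t, 0 ≤ t → x' t + x t = θ t • f (x t) + (1 - θ t) • T (x t))
    (hxC : ∀ t, 0 ≤ t → x t ∈ C) (hM : ∀ t, 0 ≤ t → ‖f (x t) - T (x t)‖ ≤ M)
    {t h : ℝ} (ht : 0 ≤ t) (hh : 0 < h) :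
    Real.exp ((1 - α) * ∫ s in (0:ℝ)..t + h, θ s) * ‖x (t + h) - x t‖ ≤
      Real.exp ((1 - α) * h) * (‖x h - x 0‖ +
        M * (h * ∫ s in (0:ℝ)..t + h, Real.exp ((1 - α) * ∫ τ in (0:ℝ)..s, θ τ) * |θ' s|)) := by
  set γ := 1 - α
  set Θ : ℝ → ℝ := fun r => ∫ s in (0:ℝ)..r, θ s
  have hγ : 0 ≤ γ := by linarith
  have hM0 : 0 ≤ M := (norm_nonneg _).trans (hM 0 le_rfl)
  have hθc : ContinuousOn θ (Ici 0) := continuousOn_Ici_of_eq_add_integral hθ'int hθFTC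
  have hθint : ∀ r, 0 ≤ r → IntervalIntegrable θ volume 0 r :=
    fun _ => intervalIntegrable_of_continuousOn_Ici hθc
  have hρc : ContinuousOn (fun s => Real.exp (γ * Θ s)) (Ici 0) :=
    (continuousOn_const.mul (continuousOn_primitive_Ici hθint)).rexp
  have hρmono : MonotoneOn (fun s => Real.exp (γ * Θ s)) (Ici 0) := fun a ha b hb hab =>
    Real.exp_le_exp.2 (mul_le_mul_of_nonneg_left
      (monotoneOn_primitive_Ici hθint (fun s hs => (hθ s hs).1) ha hb hab) hγ)
  have hexp_le : ∀ s, 0 ≤ s → Real.exp (γ * Θ (s + h)) ≤ Real.exp (γ * h) * Real.exp (γ * Θ s) :=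
    fun s hs => exp_mul_primitive_add_le hθc (fun r hr => (hθ r hr).2) hγ hs hh.le
  have hinit : Real.exp (γ * Θ h) ≤ Real.exp (γ * h) := by
    simpa [Θ] using hexp_le 0 le_rfl
  have hshift : MapsTo (· + h) (Icc 0 t) (Ici 0) := fun s hs => by
    simp only [mem_Ici]; linarith [hs.1]
  have hΔc : ContinuousOn (fun s => |θ (s + h) - θ s|) (Icc 0 t) :=
    ((hθc.comp (continuousOn_id.add continuousOn_const) hshift).sub
      (hθc.mono Icc_subset_Ici_self)).abs
  have hintegral : ∫ s in (0:ℝ)..t, Real.exp (γ * Θ (s + h)) * (M * |θ (s + h) - θ s|) ≤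
      Real.exp (γ * h) * (M * (h * ∫ s in (0:ℝ)..t + h, Real.exp (γ * Θ s) * |θ' s|)) :=
    calc ∫ s in (0:ℝ)..t, Real.exp (γ * Θ (s + h)) * (M * |θ (s + h) - θ s|)
        ≤ ∫ s in (0:ℝ)..t, Real.exp (γ * h) * M * (Real.exp (γ * Θ s) * |θ (s + h) - θ s|) := by
          refine intervalIntegral.integral_mono_on ht
            (ContinuousOn.intervalIntegrable_of_Icc ht ?_)
            (ContinuousOn.intervalIntegrable_of_Icc ht ?_) fun s hs => ?_
          · exact (hρc.comp (continuousOn_id.add continuousOn_const) hshift).mul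
              (continuousOn_const.mul hΔc)
          · exact continuousOn_const.mul ((hρc.mono Icc_subset_Ici_self).mul hΔc)
          · have := mul_le_mul_of_nonneg_right (hexp_le s hs.1)
              (mul_nonneg hM0 (abs_nonneg (θ (s + h) - θ s)))
            linarith
      _ = Real.exp (γ * h) * M * ∫ s in (0:ℝ)..t, Real.exp (γ * Θ s) * |θ (s + h) - θ s| :=
          intervalIntegral.integral_const_mul _ _
      _ ≤ Real.exp (γ * h) * M * (h * ∫ s in (0:ℝ)..t + h, Real.exp (γ * Θ s) * |θ' s|) := by
          gcongr
          exact integral_mul_abs_sub_le hθ'int hθFTC hρc (fun s _ => (Real.exp_pos _).le)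
            hρmono ht hh.le
      _ = _ := by ring
  have key := exp_mul_norm_sub_le_add_integral hf hT hθ hθc hx' hode hxC hM ht hh
  linarith [mul_le_mul_of_nonneg_right hinit (norm_nonneg (x h - x 0))]

theorem exp_mul_norm_deriv_le {H : Type*} [NormedAddCommGroup H] [InnerProductSpace ℝ H]
    {C : Set H} {f T : H → H} {α M : ℝ} (hα1 : α < 1)
    (hf : ∀ x ∈ C, ∀ y ∈ C, ‖f x - f y‖ ≤ α * ‖x - y‖)
    (hT : ∀ x ∈ C, ∀ y ∈ C, ‖T x - T y‖ ≤ ‖x - y‖)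
    {θ θ' : ℝ → ℝ} (hθ : ∀ t, 0 ≤ t → 0 ≤ θ t ∧ θ t ≤ 1)
    (hθ'int : ∀ t, 0 ≤ t → IntervalIntegrable θ' volume 0 t)
    (hθFTC : ∀ t, 0 ≤ t → θ t = θ 0 + ∫ s in (0:ℝ)..t, θ' s)
    {x x' : ℝ → H} (hx' : ∀ t, 0 ≤ t → HasDerivAt x (x' t) t)
    (hode : ∀ t, 0 ≤ t → x' t + x t = θ t • f (x t) + (1 - θ t) • T (x t))
    (hxC : ∀ t, 0 ≤ t → x t ∈ C) (hM : ∀ t, 0 ≤ t → ‖f (x t) - T (x t)‖ ≤ M)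
    {t : ℝ} (ht : 0 ≤ t) :
    Real.exp ((1 - α) * ∫ s in (0:ℝ)..t, θ s) * ‖x' t‖ ≤
      ‖x' 0‖ + M * ∫ s in (0:ℝ)..t, Real.exp ((1 - α) * ∫ τ in (0:ℝ)..s, θ τ) * |θ' s| := by
  set γ := 1 - α
  set Θ : ℝ → ℝ := fun r => ∫ s in (0:ℝ)..r, θ s
  set Φ : ℝ → ℝ := fun r => ∫ s in (0:ℝ)..r, Real.exp (γ * Θ s) * |θ' s|
  have hΘc : ContinuousOn Θ (Ici 0) := continuousOn_primitive_Ici fun _ =>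
    intervalIntegrable_of_continuousOn_Ici (continuousOn_Ici_of_eq_add_integral hθ'int hθFTC)
  have hΦc : ContinuousOn Φ (Ici 0) := continuousOn_primitive_Ici fun r hr =>
    (hθ'int r hr).abs.continuousOn_mul ((continuousOn_const.mul hΘc).rexp.mono
      fun s hs => by rw [uIcc_of_le hr] at hs; exact hs.1)
  have hslope : ∀ h ∈ Ioi (0:ℝ), Real.exp (γ * Θ (t + h)) * ‖h⁻¹ • (x (t + h) - x t)‖ ≤
      Real.exp (γ * h) * (‖h⁻¹ • (x (0 + h) - x 0)‖ + M * Φ (t + h)) := by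
    intro h (hh : 0 < h)
    have := exp_mul_norm_sub_le hα1 hf hT hθ hθ'int hθFTC hx' hode hxC hM ht hh
    rw [norm_smul, norm_smul, Real.norm_of_nonneg (inv_nonneg.2 hh.le), zero_add]
    calc Real.exp (γ * Θ (t + h)) * (h⁻¹ * ‖x (t + h) - x t‖)
        = h⁻¹ * (Real.exp (γ * Θ (t + h)) * ‖x (t + h) - x t‖) := by ring
      _ ≤ h⁻¹ * (Real.exp (γ * h) * (‖x h - x 0‖ + M * (h * Φ (t + h)))) := by gcongr
      _ = Real.exp (γ * h) * (h⁻¹ * ‖x h - x 0‖ + M * Φ (t + h)) := by field_simp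
  have hL : Tendsto (fun h => Real.exp (γ * Θ (t + h)) * ‖h⁻¹ • (x (t + h) - x t)‖) (𝓝[>] 0)
      (𝓝 (Real.exp (γ * Θ t) * ‖x' t‖)) :=
    ((tendsto_comp_add_nhdsGT_of_continuousOn_Ici hΘc ht).const_mul γ).rexp.mul
      (hx' t ht).tendsto_slope_zero_right.norm
  have hR : Tendsto (fun h => Real.exp (γ * h) * (‖h⁻¹ • (x (0 + h) - x 0)‖ + M * Φ (t + h)))
      (𝓝[>] 0) (𝓝 (Real.exp (γ * 0) * (‖x' 0‖ + M * Φ t))) :=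
    (((continuous_const.mul continuous_id).rexp.tendsto 0).mono_left nhdsWithin_le_nhds).mul
      ((hx' 0 le_rfl).tendsto_slope_zero_right.norm.add
        ((tendsto_comp_add_nhdsGT_of_continuousOn_Ici hΦc ht).const_mul M))
  simpa using le_of_tendsto_of_tendsto hL hR (eventually_nhdsWithin_of_forall hslope)

theorem stmt10_general {H : Type*} [NormedAddCommGroup H] [InnerProductSpace ℝ H]
    (C : Set H)
    (f T : H → H)
    (α : ℝ) (hα1 : α < 1)
    (hf : ∀ x ∈ C, ∀ y ∈ C, ‖f x - f y‖ ≤ α * ‖x - y‖)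
    (hT : ∀ x ∈ C, ∀ y ∈ C, ‖T x - T y‖ ≤ ‖x - y‖)
    (θ θ' : ℝ → ℝ) (hθ : ∀ t, 0 ≤ t → 0 < θ t ∧ θ t ≤ 1)
    (hθ'int : ∀ t, 0 ≤ t → IntervalIntegrable θ' volume 0 t)
    (hθFTC : ∀ t, 0 ≤ t → θ t = θ 0 + ∫ s in (0:ℝ)..t, θ' s)
    (x x' : ℝ → H) (hx' : ∀ t, 0 ≤ t → HasDerivAt x (x' t) t)
    (hode : ∀ t, 0 ≤ t →
      x' t + x t = θ t • f (x t) + (1 - θ t) • T (x t))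
    (hxC : ∀ t, 0 ≤ t → x t ∈ C)
    (M : ℝ)
    (hM : M = ⨆ s : Set.Ici (0:ℝ), (‖f (x s)‖ + ‖T (x s)‖))
    (hMfin : BddAbove (Set.range fun s : Set.Ici (0:ℝ) => ‖f (x s)‖ + ‖T (x s)‖)) :
    ∀ t, 0 ≤ t →
      ‖x' t‖ ≤ Real.exp (-((1 - α) * ∫ s in (0:ℝ)..t, θ s)) * ‖x' 0‖ +
        M * Real.exp (-((1 - α) * ∫ s in (0:ℝ)..t, θ s)) *
          ∫ s in (0:ℝ)..t, Real.exp ((1 - α) * ∫ τ in (0:ℝ)..s, θ τ) * |θ' s| := by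
  intro t ht
  have hMb : ∀ s, 0 ≤ s → ‖f (x s) - T (x s)‖ ≤ M := fun s hs =>
    (norm_sub_le _ _).trans (hM ▸ le_ciSup hMfin ⟨s, hs⟩)
  have key := exp_mul_norm_deriv_le hα1 hf hT (fun s hs => ⟨(hθ s hs).1.le, (hθ s hs).2⟩)
    hθ'int hθFTC hx' hode hxC hMb ht
  set E := (1 - α) * ∫ s in (0:ℝ)..t, θ s
  set Φ := ∫ s in (0:ℝ)..t, Real.exp ((1 - α) * ∫ τ in (0:ℝ)..s, θ τ) * |θ' s|
  calc ‖x' t‖ = Real.exp (-E) * (Real.exp E * ‖x' t‖) := by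
        rw [← mul_assoc, ← Real.exp_add, neg_add_cancel, Real.exp_zero, one_mul]
    _ ≤ Real.exp (-E) * (‖x' 0‖ + M * Φ) := by gcongr
    _ = Real.exp (-E) * ‖x' 0‖ + M * Real.exp (-E) * Φ := by ring

theorem stmt10 {H : Type*} [NormedAddCommGroup H] [InnerProductSpace ℝ H]
    [CompleteSpace H]
    (C : Set H) (hCne : C.Nonempty) (hCcl : IsClosed C) (hCconv : Convex ℝ C)
    (f T : H → H) (hfC : Set.MapsTo f C C) (hTC : Set.MapsTo T C C)
    (α : ℝ) (hα0 : 0 ≤ α) (hα1 : α < 1)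
    (hf : ∀ x ∈ C, ∀ y ∈ C, ‖f x - f y‖ ≤ α * ‖x - y‖)
    (hT : ∀ x ∈ C, ∀ y ∈ C, ‖T x - T y‖ ≤ ‖x - y‖)
    (θ θ' : ℝ → ℝ) (hθ : ∀ t, 0 ≤ t → 0 < θ t ∧ θ t ≤ 1)
    (hθ'int : ∀ t, 0 ≤ t → IntervalIntegrable θ' volume 0 t)
    (hθFTC : ∀ t, 0 ≤ t → θ t = θ 0 + ∫ s in (0:ℝ)..t, θ' s)
    (x x' : ℝ → H) (hx' : ∀ t, 0 ≤ t → HasDerivAt x (x' t) t)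
    (hx'c : Continuous x')
    (hode : ∀ t, 0 ≤ t →
      x' t + x t = θ t • f (x t) + (1 - θ t) • T (x t))
    (hxC : ∀ t, 0 ≤ t → x t ∈ C)
    (M : ℝ)
    (hM : M = ⨆ s : Set.Ici (0:ℝ), (‖f (x s)‖ + ‖T (x s)‖))
    (hMfin : BddAbove (Set.range fun s : Set.Ici (0:ℝ) => ‖f (x s)‖ + ‖T (x s)‖)) :
    ∀ t, 0 ≤ t →
      ‖x' t‖ ≤ Real.exp (-((1 - α) * ∫ s in (0:ℝ)..t, θ s)) * ‖x' 0‖ +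
        M * Real.exp (-((1 - α) * ∫ s in (0:ℝ)..t, θ s)) *
          ∫ s in (0:ℝ)..t, Real.exp ((1 - α) * ∫ τ in (0:ℝ)..s, θ τ) * |θ' s| :=
  stmt10_general C f T α hα1 hf hT θ θ' hθ hθ'int hθFTC x x' hx' hode hxC M hM hMfin
end

section
/- Let K > 0, γ > 0, 0 < ν < 1, θ(t) = K/(1+t)^ν, Θ(t) = ∫₀ᵗ θ(s) ds, and κ = γK/(1−ν). Then the limit as t → ∞ of the ratio ( ∫₀ᵗ e^{κ(1+s)^{1−ν}} (1+s)^{−(1+ν)} ds ) / ( (1/(κ(1−ν))) · e^{κ(1+t)^{1−ν}}/(1+t) ) equals 1; consequently there is a constant M' > 0 such that r(t) := e^{−γΘ(t)} ∫₀ᵗ e^{γΘ(s)} |θ'(s)| ds ≤ M'/(1+t) for all t ≥ 0. -/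
/-!
Writing `y = 1 + t`, the function `G(t) = e^{κ y^{1-ν}} / (κ (1-ν) y)` has derivative
`(1 - y^{ν-1}/(κ(1-ν))) · e^{κ y^{1-ν}} y^{-(1+ν)}`, which is asymptotically equivalent to the
integrand. Since `G → ∞`, integrating this equivalence (an integral form of L'Hospital's rule) gives
`∫₀ᵗ e^{κ(1+s)^{1-ν}} (1+s)^{-(1+ν)} ds ~ G(t)`. With `Θ(t) = K((1+t)^{1-ν} - 1)/(1-ν)` and
`|θ'| = Kν(1+s)^{-(1+ν)}`, `r(t)` is `Kν e^{-κ(1+t)^{1-ν}}` times that integral, hence `O(1/(1+t))`.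
-/

open Filter Topology Asymptotics MeasureTheory

theorem Asymptotics.IsLittleO.intervalIntegral_atTop {u v : ℝ → ℝ} {a : ℝ}
    (hu : ∀ b ≥ a, IntervalIntegrable u volume a b)
    (hv : ∀ b ≥ a, IntervalIntegrable v volume a b)
    (huv : u =o[atTop] v) (hv0 : ∀ᶠ s in atTop, 0 ≤ v s)
    (hV : Tendsto (fun t => ∫ s in a..t, v s) atTop atTop) :
    (fun t => ∫ s in a..t, u s) =o[atTop] (fun t => ∫ s in a..t, v s) := by
  refine isLittleO_iff.2 fun ε hε => ?_
  obtain ⟨S, hS⟩ := eventually_atTop.1 ((isLittleO_iff.1 huv (half_pos hε)).and hv0)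
  set S' := max a S
  have huS := hu S' (le_max_left _ _)
  have hvS := hv S' (le_max_left _ _)
  filter_upwards [eventually_ge_atTop S',
    hV.eventually_ge_atTop ((‖∫ s in a..S', u s‖ - ε / 2 * ∫ s in a..S', v s) / (ε / 2)),
    hV.eventually_ge_atTop 0] with t hSt hVt hV0
  have hut := hu t ((le_max_left _ _).trans hSt)
  have hvt := hv t ((le_max_left _ _).trans hSt)
  have htail : ‖∫ s in S'..t, u s‖ ≤ ε / 2 * ∫ s in S'..t, v s := by
    rw [← intervalIntegral.integral_const_mul]
    refine intervalIntegral.norm_integral_le_of_norm_le hSt (ae_of_all _ fun s hs => ?_)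
      ((hvS.symm.trans hvt).const_mul _)
    obtain ⟨hle, hnonneg⟩ := hS s ((le_max_right a S).trans hs.1.le)
    rwa [Real.norm_of_nonneg hnonneg] at hle
  have hsplit_u := intervalIntegral.integral_add_adjacent_intervals huS (huS.symm.trans hut)
  have hsplit_v := intervalIntegral.integral_add_adjacent_intervals hvS (hvS.symm.trans hvt)
  rw [div_le_iff₀ (half_pos hε)] at hVt
  rw [Real.norm_of_nonneg hV0, ← hsplit_u]
  calc _ ≤ ‖∫ s in a..S', u s‖ + ‖∫ s in S'..t, u s‖ := norm_add_le _ _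
    _ ≤ _ := by rw [← hsplit_v] at hVt ⊢; linarith

theorem Asymptotics.IsEquivalent.intervalIntegral_atTop {u v : ℝ → ℝ} {a : ℝ}
    (hu : ∀ b ≥ a, IntervalIntegrable u volume a b)
    (hv : ∀ b ≥ a, IntervalIntegrable v volume a b)
    (huv : u ~[atTop] v) (hv0 : ∀ᶠ s in atTop, 0 ≤ v s)
    (hV : Tendsto (fun t => ∫ s in a..t, v s) atTop atTop) :
    (fun t => ∫ s in a..t, u s) ~[atTop] (fun t => ∫ s in a..t, v s) := by
  refine (huv.isLittleO.intervalIntegral_atTop (fun b hb => (hu b hb).sub (hv b hb)) hv hv0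
    hV).congr' ?_ EventuallyEq.rfl
  filter_upwards [eventually_ge_atTop a] with t ht
  exact intervalIntegral.integral_sub (hu t ht) (hv t ht)

theorem neg_one_lt_of_mem_uIcc {s t : ℝ} (ht : -1 < t) (hs : s ∈ Set.uIcc 0 t) : -1 < s :=
  Set.ordConnected_Ioi.uIcc_subset (Set.mem_Ioi.2 (by norm_num)) ht hs

theorem integral_div_one_add_rpow {K ν : ℝ} (hν : ν < 1) {t : ℝ} (ht : -1 < t) :
    ∫ s in (0:ℝ)..t, K / (1 + s) ^ ν = K / (1 - ν) * ((1 + t) ^ (1 - ν) - 1) := by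
  have hcongr : Set.EqOn (fun s : ℝ => K / (1 + s) ^ ν) (fun s => K * (1 + s) ^ (-ν))
      (Set.uIcc 0 t) := fun s hs => by
    have : 0 ≤ 1 + s := by linarith [neg_one_lt_of_mem_uIcc ht hs]
    simp only [Real.rpow_neg this, div_eq_mul_inv]
  rw [intervalIntegral.integral_congr hcongr, intervalIntegral.integral_const_mul,
    intervalIntegral.integral_comp_add_left (fun x => x ^ (-ν)),
    integral_rpow (Or.inl (by linarith)), show -ν + 1 = 1 - ν by ring, add_zero, Real.one_rpow]
  ring

theorem abs_deriv_div_one_add_rpow {K ν : ℝ} (hK : 0 ≤ K) (hν : 0 ≤ ν) {s : ℝ} (hs : -1 < s) :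
    |deriv (fun u => K / (1 + u) ^ ν) s| = K * ν * (1 + s) ^ (-(1 + ν)) := by
  have hs : 0 < 1 + s := by linarith
  have hpow := Real.rpow_pos_of_pos hs ν
  have h := (hasDerivAt_const s K).div
    (((hasDerivAt_id s).const_add 1).rpow_const (p := ν) (Or.inl hs.ne')) hpow.ne'
  rw [HasDerivAt.deriv (f := fun u : ℝ => K / (1 + u) ^ ν) h]
  simp only [id, zero_mul, one_mul, zero_sub]
  rw [neg_div, abs_neg, abs_of_nonneg (by positivity), Real.rpow_sub_one hs.ne',
    Real.rpow_neg hs.le, Real.rpow_add hs, Real.rpow_one]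
  field_simp

-- The quantity `r(t)` of the statement, for a general `θ`.
noncomputable def dampedVariation (γ : ℝ) (θ : ℝ → ℝ) (t : ℝ) : ℝ :=
  Real.exp (-(γ * ∫ s in (0:ℝ)..t, θ s)) *
    ∫ s in (0:ℝ)..t, Real.exp (γ * ∫ τ in (0:ℝ)..s, θ τ) * |deriv θ s|

namespace StretchedExp

noncomputable def weight (κ ν s : ℝ) : ℝ :=
  Real.exp (κ * (1 + s) ^ (1 - ν)) * (1 + s) ^ (-(1 + ν))

noncomputable def asymptote (κ ν t : ℝ) : ℝ :=
  1 / (κ * (1 - ν)) * (Real.exp (κ * (1 + t) ^ (1 - ν)) / (1 + t))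

variable {κ ν : ℝ}

theorem continuousOn_weight : ContinuousOn (weight κ ν) (Set.Ioi (-1)) := by
  intro s hs
  have hs : 1 + s ≠ 0 := by rw [Set.mem_Ioi] at hs; linarith
  unfold weight
  fun_prop (disch := simp [hs])

theorem intervalIntegrable_weight {a b : ℝ} (ha : -1 < a) (hb : -1 < b) :
    IntervalIntegrable (weight κ ν) volume a b :=
  (continuousOn_weight.mono (Set.ordConnected_Ioi.uIcc_subset ha hb)).intervalIntegrable

theorem weight_nonneg {s : ℝ} (hs : -1 < s) : 0 ≤ weight κ ν s := by
  have : 0 < 1 + s := by linarith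
  unfold weight; positivity

theorem hasDerivAt_asymptote (hκ : κ ≠ 0) (hν : ν ≠ 1) {s : ℝ} (hs : -1 < s) :
    HasDerivAt (asymptote κ ν) ((1 - (1 + s) ^ (ν - 1) / (κ * (1 - ν))) * weight κ ν s) s := by
  have hs : 0 < 1 + s := by linarith
  have h1 : HasDerivAt (fun x : ℝ => 1 + x) 1 s := (hasDerivAt_id s).const_add 1
  have h2 := ((h1.rpow_const (p := 1 - ν) (Or.inl hs.ne')).const_mul κ).exp
  refine ((h2.div h1 hs.ne').const_mul (1 / (κ * (1 - ν)))).congr_deriv ?_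
  have hκν : κ * (1 - ν) ≠ 0 := mul_ne_zero hκ (sub_ne_zero.2 hν.symm)
  have hpow : (1 + s) ^ ν ≠ 0 := (Real.rpow_pos_of_pos hs ν).ne'
  rw [weight, show 1 - ν - 1 = -ν by ring, Real.rpow_sub_one hs.ne', Real.rpow_neg hs.le,
    Real.rpow_neg hs.le, Real.rpow_add hs, Real.rpow_one]
  field_simp

theorem tendsto_asymptote_atTop (hκ : 0 < κ) (hν : ν < 1) :
    Tendsto (asymptote κ ν) atTop atTop := by
  have h1ν : 0 < 1 - ν := sub_pos.2 hν
  have hy : Tendsto (fun t : ℝ => (1 + t) ^ (1 - ν)) atTop atTop :=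
    (tendsto_rpow_atTop h1ν).comp (tendsto_atTop_add_const_left _ 1 tendsto_id)
  refine (((tendsto_exp_mul_div_rpow_atTop (1 - ν)⁻¹ κ hκ).comp hy).const_mul_atTop
    (by positivity : 0 < 1 / (κ * (1 - ν)))).congr' ?_
  filter_upwards [eventually_ge_atTop 0] with t ht
  simp only [Function.comp_apply, asymptote, Real.rpow_rpow_inv (by linarith : 0 ≤ 1 + t) h1ν.ne']

theorem isEquivalent_deriv_asymptote (hν : ν < 1) :
    (fun s => (1 - (1 + s) ^ (ν - 1) / (κ * (1 - ν))) * weight κ ν s) ~[atTop] weight κ ν := by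
  have h : Tendsto (fun s : ℝ => 1 - (1 + s) ^ (ν - 1) / (κ * (1 - ν))) atTop (𝓝 1) := by
    have := ((tendsto_rpow_neg_atTop (sub_pos.2 hν)).comp
      (tendsto_atTop_add_const_left _ 1 tendsto_id)).div_const (κ * (1 - ν))
    simpa using (tendsto_const_nhds (x := (1:ℝ))).sub this
  have := ((isEquivalent_const_iff_tendsto one_ne_zero).2 h).mul
    (IsEquivalent.refl (u := weight κ ν))
  simp only [Function.const_one, one_mul] at this
  exact this

theorem isEquivalent_integral_weight (hκ : 0 < κ) (hν : ν < 1) :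
    (fun t => ∫ s in (0:ℝ)..t, weight κ ν s) ~[atTop] asymptote κ ν := by
  set g := fun s => (1 - (1 + s) ^ (ν - 1) / (κ * (1 - ν))) * weight κ ν s
  have hgc : ContinuousOn g (Set.Ioi (-1)) := by
    refine ContinuousOn.mul (fun s hs => ?_) continuousOn_weight
    have hs : 1 + s ≠ 0 := by rw [Set.mem_Ioi] at hs; linarith
    fun_prop (disch := simp [hs])
  have hg : ∀ b ≥ 0, IntervalIntegrable g volume 0 b := fun b hb =>
    (hgc.mono fun _ hs => neg_one_lt_of_mem_uIcc (by linarith) hs).intervalIntegrable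
  have hw : ∀ b ≥ 0, IntervalIntegrable (weight κ ν) volume 0 b := fun b hb =>
    intervalIntegrable_weight (by norm_num) (by linarith)
  have hFTC : ∀ b ≥ 0, ∫ s in (0:ℝ)..b, g s = asymptote κ ν b + -asymptote κ ν 0 := by
    intro b hb
    rw [← sub_eq_add_neg]
    refine intervalIntegral.integral_eq_sub_of_hasDerivAt (fun s hs => ?_) (hg b hb)
    exact hasDerivAt_asymptote hκ.ne' hν.ne (neg_one_lt_of_mem_uIcc (by linarith) hs)
  have hgw := isEquivalent_deriv_asymptote (κ := κ) hν
  have hw0 : ∀ᶠ s in atTop, 0 ≤ weight κ ν s :=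
    (eventually_gt_atTop (-1)).mono fun _ => weight_nonneg
  have hG := tendsto_asymptote_atTop hκ hν
  have hFTC' : (fun t => ∫ s in (0:ℝ)..t, g s) =ᶠ[atTop] (asymptote κ ν · + -asymptote κ ν 0) :=
    eventually_atTop.2 ⟨0, hFTC⟩
  refine (hgw.symm.intervalIntegral_atTop hw hg (hgw.eventually_nonneg hw0)
    ((tendsto_atTop_add_const_right _ _ hG).congr' hFTC'.symm)).trans ?_
  exact hFTC'.trans_isEquivalent
    (IsEquivalent.refl.add_const_of_norm_tendsto_atTop (tendsto_norm_atTop_atTop.comp hG))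

theorem exists_exp_neg_mul_integral_weight_le (hκ : 0 < κ) (hν : ν < 1) :
    ∃ M > 0, ∀ t ≥ 0,
      Real.exp (-(κ * (1 + t) ^ (1 - ν))) * ∫ s in (0:ℝ)..t, weight κ ν s ≤ M / (1 + t) := by
  obtain ⟨C, hC, hCF⟩ := (isEquivalent_integral_weight hκ hν).isBigO.exists_pos
  obtain ⟨T, hT⟩ := eventually_atTop.1 hCF.bound
  set T' := max 0 T
  set F := fun t => ∫ s in (0:ℝ)..t, weight κ ν s
  have hF0 : ∀ t ≥ 0, 0 ≤ F t := fun t ht =>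
    intervalIntegral.integral_nonneg ht fun s hs => weight_nonneg (by linarith [hs.1])
  have hFT : 0 ≤ F T' := hF0 T' (le_max_left _ _)
  have h1ν : 0 < 1 - ν := sub_pos.2 hν
  refine ⟨C / (κ * (1 - ν)) + F T' * (1 + T'), by positivity, fun t ht => ?_⟩
  have ht1 : 0 < 1 + t := by linarith
  rcases le_total t T' with htT | htT
  · have hFt : F t ≤ F T' := intervalIntegral.integral_mono_interval le_rfl ht htT
      ((ae_restrict_iff' measurableSet_Ioc).2 (ae_of_all _ fun s hs =>
        weight_nonneg (by linarith [hs.1])))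
      (intervalIntegrable_weight (by norm_num) (by linarith [le_max_left 0 T]))
    calc Real.exp (-(κ * (1 + t) ^ (1 - ν))) * F t ≤ F t :=
          mul_le_of_le_one_left (hF0 t ht) (Real.exp_le_one_iff.2 (by
            have : 0 < (1 + t) ^ (1 - ν) := by positivity
            nlinarith))
      _ ≤ F T' * (1 + T') / (1 + t) := by
          rw [le_div_iff₀ ht1]; gcongr
      _ ≤ _ := by gcongr; exact le_add_of_nonneg_left (by positivity)
  · have hFG := hT t ((le_max_right 0 T).trans htT)
    rw [Real.norm_of_nonneg (hF0 t ht), Real.norm_of_nonneg (by unfold asymptote; positivity)]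
      at hFG
    calc Real.exp (-(κ * (1 + t) ^ (1 - ν))) * F t
        ≤ Real.exp (-(κ * (1 + t) ^ (1 - ν))) * (C * asymptote κ ν t) := by gcongr
      _ = C / (κ * (1 - ν)) / (1 + t) := by
          unfold asymptote; rw [Real.exp_neg]; field_simp
      _ ≤ _ := by gcongr; exact le_add_of_nonneg_right (by positivity)

theorem dampedVariation_div_one_add_rpow {K γ : ℝ} (hK : 0 ≤ K) (hν0 : 0 ≤ ν) (hν1 : ν < 1)
    {t : ℝ} (ht : -1 < t) :
    dampedVariation γ (fun u => K / (1 + u) ^ ν) t =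
      K * ν * (Real.exp (-(γ * K / (1 - ν) * (1 + t) ^ (1 - ν))) *
        ∫ s in (0:ℝ)..t, weight (γ * K / (1 - ν)) ν s) := by
  have hcongr : Set.EqOn
      (fun s => Real.exp (γ * ∫ τ in (0:ℝ)..s, K / (1 + τ) ^ ν) *
        |deriv (fun u => K / (1 + u) ^ ν) s|)
      (fun s => K * ν * Real.exp (-(γ * K / (1 - ν))) * weight (γ * K / (1 - ν)) ν s)
      (Set.uIcc 0 t) := fun s hs => by
    have hs := neg_one_lt_of_mem_uIcc ht hs
    dsimp only
    rw [integral_div_one_add_rpow hν1 hs, abs_deriv_div_one_add_rpow hK hν0 hs, weight,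
      show γ * (K / (1 - ν) * ((1 + s) ^ (1 - ν) - 1))
        = γ * K / (1 - ν) * (1 + s) ^ (1 - ν) + -(γ * K / (1 - ν)) by ring, Real.exp_add]
    ring
  rw [dampedVariation, intervalIntegral.integral_congr hcongr,
    intervalIntegral.integral_const_mul, integral_div_one_add_rpow hν1 ht,
    show -(γ * (K / (1 - ν) * ((1 + t) ^ (1 - ν) - 1)))
      = -(γ * K / (1 - ν) * (1 + t) ^ (1 - ν)) + γ * K / (1 - ν) by ring,
    Real.exp_add, Real.exp_neg (γ * K / (1 - ν))]
  field_simp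

end StretchedExp

open StretchedExp

theorem stmt14 (K γ ν : ℝ) (hK : 0 < K) (hγ : 0 < γ) (hν0 : 0 < ν) (hν1 : ν < 1)
    (θ : ℝ → ℝ) (hθ : ∀ t, θ t = K / (1 + t) ^ ν)
    (κ : ℝ) (hκ : κ = γ * K / (1 - ν)) :
    Tendsto (fun t =>
        (∫ s in (0:ℝ)..t, Real.exp (κ * (1 + s) ^ (1 - ν)) * (1 + s) ^ (-(1 + ν))) /
          ((1 / (κ * (1 - ν))) * (Real.exp (κ * (1 + t) ^ (1 - ν)) / (1 + t))))
      atTop (𝓝 1) ∧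
    ∃ M' > 0, ∀ t, 0 ≤ t →
      Real.exp (-(γ * ∫ s in (0:ℝ)..t, θ s)) *
          ∫ s in (0:ℝ)..t, Real.exp (γ * ∫ τ in (0:ℝ)..s, θ τ) * |deriv θ s|
        ≤ M' / (1 + t) := by
  have hκ0 : 0 < κ := hκ ▸ div_pos (mul_pos hγ hK) (sub_pos.2 hν1)
  obtain rfl : θ = fun u => K / (1 + u) ^ ν := funext hθ
  refine ⟨?_, ?_⟩
  · have hG := (tendsto_asymptote_atTop hκ0 hν1).eventually_gt_atTop 0
    exact (isEquivalent_iff_tendsto_one (hG.mono fun _ h => h.ne')).1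
      (isEquivalent_integral_weight hκ0 hν1)
  · obtain ⟨M, hM, hMbound⟩ := exists_exp_neg_mul_integral_weight_le hκ0 hν1
    refine ⟨K * ν * M, by positivity, fun t ht => ?_⟩
    have h := dampedVariation_div_one_add_rpow (γ := γ) hK.le hν0.le hν1 (by linarith : -1 < t)
    rw [dampedVariation, ← hκ] at h
    rw [h, mul_div_assoc]
    exact mul_le_mul_of_nonneg_left (hMbound t ht) (by positivity)
end

section
/- Let x and y be C¹ curves in C satisfying x'(t) + x(t) = θ(t) f(x(t)) + (1−θ(t)) T(x(t)) and y'(t) + y(t) = P_C( θ(t) f(y(t)) + (1−θ(t)) T(y(t)) + h(t) ), where h : [0,∞) → H is continuous. Then for every t ≥ 0, with v(t) = ‖x(t) − y(t)‖² and γ = 1 − α, v'(t) + 2γθ(t) v(t) ≤ 2 ‖h(t)‖ √(v(t)), and hence √(v(t)) ≤ e^{−γΘ(t)} √(v(0)) + e^{−γΘ(t)} ∫₀ᵗ e^{γΘ(s)} ‖h(s)‖ ds, where Θ(t) = ∫₀ᵗ θ(s) ds. -/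
/-!
Put `u = x - y` and `W z = θ f z + (1 - θ) T z`. The metric projection onto a convex set is
nonexpansive and fixes `W (x t) ∈ C`, while `W` is a `(1 - γθ)`-contraction, so
`⟪u, u'⟫ ≤ (1 - γθ) ‖u‖² + ‖h‖ ‖u‖ - ‖u‖²`; this is the differential inequality.

The integrated bound is the variation-of-constants formula for `w' = -γθ w + ‖h‖`. Since `√v` need
not be differentiable where `v` vanishes, `v` itself is compared with `w²` for the barriers
`w' = -γθ w + ‖h‖ + ε e^{-γΘ}`, `w 0 = √(v 0) + ε`: wherever `v = w²`, the inequality makes `w²`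
grow strictly faster than `v`, so `v ≤ w²` persists. Then `ε → 0`.
-/

open Set Real Filter Topology
open scoped RealInnerProductSpace

lemma proj_eq_self {E : Type*} [NormedAddGroup E] {C : Set E} {P : E → E}
    (hP : ∀ z, P z ∈ C ∧ ∀ y ∈ C, ‖z - P z‖ ≤ ‖z - y‖) {z : E} (hz : z ∈ C) :
    P z = z := by
  have h := (hP z).2 z hz
  rw [sub_self, norm_zero, norm_le_zero_iff, sub_eq_zero] at h
  exact h.symm

lemma norm_smul_add_smul_sub_le {H : Type*} [NormedAddCommGroup H] [NormedSpace ℝ H]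
    {θ : ℝ} (hθ0 : 0 ≤ θ) (hθ1 : θ ≤ 1) (p q p' q' : H) :
    ‖(θ • p + (1 - θ) • q) - (θ • p' + (1 - θ) • q')‖ ≤ θ * ‖p - p'‖ + (1 - θ) * ‖q - q'‖ := by
  have hsplit : (θ • p + (1 - θ) • q) - (θ • p' + (1 - θ) • q') =
      θ • (p - p') + (1 - θ) • (q - q') := by
    rw [smul_sub, smul_sub]
    abel
  rw [hsplit]
  refine (norm_add_le _ _).trans_eq ?_
  rw [norm_smul, norm_smul, norm_of_nonneg hθ0, norm_of_nonneg (sub_nonneg.2 hθ1)]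

section MetricProjection

variable {H : Type*} [NormedAddCommGroup H] [InnerProductSpace ℝ H] {C : Set H} {P : H → H}

lemma inner_sub_proj_le_zero (hC : Convex ℝ C)
    (hP : ∀ z, P z ∈ C ∧ ∀ y ∈ C, ‖z - P z‖ ≤ ‖z - y‖) (z : H) {w : H} (hw : w ∈ C) :
    ⟪z - P z, w - P z⟫ ≤ 0 := by
  have : Nonempty C := ⟨⟨P z, (hP z).1⟩⟩
  refine (norm_eq_iInf_iff_real_inner_le_zero hC (hP z).1).1 ?_ w hw
  exact le_antisymm (le_ciInf fun w => (hP z).2 w w.2)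
    (ciInf_le (f := fun w : C => ‖z - w‖) ⟨0, forall_mem_range.2 fun _ => norm_nonneg _⟩
      ⟨P z, (hP z).1⟩)

lemma norm_proj_sub_proj_le (hC : Convex ℝ C)
    (hP : ∀ z, P z ∈ C ∧ ∀ y ∈ C, ‖z - P z‖ ≤ ‖z - y‖) (a b : H) :
    ‖P a - P b‖ ≤ ‖a - b‖ := by
  have ha := inner_sub_proj_le_zero hC hP a (hP b).1
  have hb := inner_sub_proj_le_zero hC hP b (hP a).1
  have key : ‖P a - P b‖ * ‖P a - P b‖ ≤ ‖a - b‖ * ‖P a - P b‖ :=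
    calc ‖P a - P b‖ * ‖P a - P b‖
        = ⟪a - b, P a - P b⟫ + ⟪a - P a, P b - P a⟫ + ⟪b - P b, P a - P b⟫ := by
          rw [← neg_sub (P a) (P b), inner_neg_right, ← real_inner_self_eq_norm_mul_norm,
            ← sub_eq_add_neg, ← inner_sub_left, ← inner_add_left]
          congr 1
          abel
      _ ≤ ⟪a - b, P a - P b⟫ := by linarith
      _ ≤ ‖a - b‖ * ‖P a - P b‖ := real_inner_le_norm _ _
  rcases (norm_nonneg (P a - P b)).eq_or_lt with h0 | hpos
  · rw [← h0]
    exact norm_nonneg _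
  · exact le_of_mul_le_mul_right key hpos

lemma inner_sub_proj_add_sub_le (hC : Convex ℝ C)
    (hP : ∀ z, P z ∈ C ∧ ∀ y ∈ C, ‖z - P z‖ ≤ ‖z - y‖) {p : H} (hp : p ∈ C) (q k u : H) :
    ⟪u, (p - P (q + k)) - u⟫ ≤ (‖p - q‖ + ‖k‖) * ‖u‖ - ‖u‖ ^ 2 := by
  have hproj : ‖p - P (q + k)‖ ≤ ‖p - q‖ + ‖k‖ :=
    calc ‖p - P (q + k)‖ = ‖P p - P (q + k)‖ := by rw [proj_eq_self hP hp]
      _ ≤ ‖(p - q) - k‖ := by rw [sub_sub]; exact norm_proj_sub_proj_le hC hP _ _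
      _ ≤ ‖p - q‖ + ‖k‖ := norm_sub_le _ _
  rw [inner_sub_right, real_inner_self_eq_norm_sq, real_inner_comm]
  gcongr
  exact (real_inner_le_norm _ _).trans (mul_le_mul_of_nonneg_right hproj (norm_nonneg u))

lemma inner_sub_proj_smul_add_smul_sub_le (hC : Convex ℝ C)
    (hP : ∀ z, P z ∈ C ∧ ∀ y ∈ C, ‖z - P z‖ ≤ ‖z - y‖) {f T : H → H} {α θ : ℝ} (hθ0 : 0 ≤ θ)
    (hθ1 : θ ≤ 1) {x y : H} (hfx : f x ∈ C) (hTx : T x ∈ C) (hf : ‖f x - f y‖ ≤ α * ‖x - y‖)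
    (hT : ‖T x - T y‖ ≤ ‖x - y‖) (k : H) :
    ⟪x - y, (θ • f x + (1 - θ) • T x - P (θ • f y + (1 - θ) • T y + k)) - (x - y)⟫ +
      (1 - α) * θ * ‖x - y‖ ^ 2 ≤ ‖k‖ * ‖x - y‖ := by
  have hWx : θ • f x + (1 - θ) • T x ∈ C :=
    hC hfx hTx hθ0 (sub_nonneg.2 hθ1) (add_sub_cancel _ _)
  have hW : ‖(θ • f x + (1 - θ) • T x) - (θ • f y + (1 - θ) • T y)‖ ≤
      (1 - (1 - α) * θ) * ‖x - y‖ :=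
    calc _ ≤ θ * ‖f x - f y‖ + (1 - θ) * ‖T x - T y‖ := norm_smul_add_smul_sub_le hθ0 hθ1 _ _ _ _
      _ ≤ θ * (α * ‖x - y‖) + (1 - θ) * ‖x - y‖ := by gcongr
      _ = (1 - (1 - α) * θ) * ‖x - y‖ := by ring
  have hstep := inner_sub_proj_add_sub_le hC hP hWx (θ • f y + (1 - θ) • T y) k (x - y)
  nlinarith [mul_le_mul_of_nonneg_right hW (norm_nonneg (x - y))]

end MetricProjection

section Comparison

variable {v v' a b A : ℝ → ℝ} {t : ℝ}

lemma hasDerivAt_exp_neg_mul_add_integral (hA : ∀ s, HasDerivAt A (a s) s) (hb : Continuous b)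
    (c ε s : ℝ) :
    HasDerivAt (fun r => exp (-A r) * (c + ε * r + ∫ τ in (0:ℝ)..r, exp (A τ) * b τ))
      (-a s * (exp (-A s) * (c + ε * s + ∫ τ in (0:ℝ)..s, exp (A τ) * b τ)) + b s +
        ε * exp (-A s)) s := by
  have hAc : Continuous A := continuous_iff_continuousAt.2 fun τ => (hA τ).continuousAt
  have hG := (((hasDerivAt_id s).const_mul ε).const_add c).add
    ((hAc.rexp.mul hb).integral_hasStrictDerivAt 0 s).hasDerivAt
  have hexp : exp (-A s) * exp (A s) = 1 := by rw [← exp_add, neg_add_cancel, exp_zero]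
  refine (((hA s).neg.exp).mul hG).congr_deriv ?_
  simp only [Pi.mul_apply, Pi.add_apply, Pi.neg_apply, id, mul_one]
  linear_combination b s * hexp

lemma sqrt_le_exp_neg_mul_add_integral_add (ht : 0 ≤ t) (hv : ContinuousOn v (Icc 0 t))
    (hv' : ∀ s ∈ Ico 0 t, HasDerivWithinAt v (v' s) (Ici s) s)
    (hA : ∀ s, HasDerivAt A (a s) s) (hA0 : A 0 = 0) (hb : Continuous b)
    (hb0 : ∀ s ∈ Icc 0 t, 0 ≤ b s)
    (hbound : ∀ s ∈ Ico 0 t, v' s + 2 * a s * v s ≤ 2 * b s * √(v s)) {ε : ℝ} (hε : 0 < ε) :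
    √(v t) ≤ exp (-A t) * (√(v 0) + ε + ε * t + ∫ s in (0:ℝ)..t, exp (A s) * b s) := by
  set ψ : ℝ → ℝ := fun r => exp (-A r) * (√(v 0) + ε + ε * r + ∫ τ in (0:ℝ)..r, exp (A τ) * b τ)
    with hψ_def
  have hψ := hasDerivAt_exp_neg_mul_add_integral hA hb (√(v 0) + ε) ε
  have hψ_pos : ∀ s ∈ Icc 0 t, 0 < ψ s := by
    intro s hs
    have hI : 0 ≤ ∫ τ in (0:ℝ)..s, exp (A τ) * b τ :=
      intervalIntegral.integral_nonneg hs.1 fun τ hτ =>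
        mul_nonneg (exp_pos _).le (hb0 τ ⟨hτ.1, hτ.2.trans hs.2⟩)
    exact mul_pos (exp_pos _) (by linarith [sqrt_nonneg (v 0), mul_nonneg hε.le hs.1])
  have hψ0 : ψ 0 = √(v 0) + ε := by simp [hψ_def, hA0]
  have hcomp : ∀ s ∈ Icc 0 t, v s ≤ ψ s ^ 2 := by
    refine image_le_of_deriv_right_lt_deriv_boundary hv hv' ?_ (fun s => (hψ s).pow 2) ?_
    · rw [hψ0]
      exact (sqrt_le_iff.1 (le_add_of_nonneg_right hε.le)).2
    · intro s hs hvs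
      have hψs := hψ_pos s (Ico_subset_Icc_self hs)
      have hsqrt : √(v s) = ψ s := by rw [hvs, sqrt_sq hψs.le]
      have hgap := mul_pos (mul_pos hε (exp_pos (-A s))) hψs
      have hbd := hbound s hs
      rw [hsqrt, hvs] at hbd
      simp only [Nat.cast_ofNat, Nat.add_one_sub_one, pow_one]
      nlinarith
  exact sqrt_le_iff.2 ⟨(hψ_pos t ⟨ht, le_rfl⟩).le, hcomp t ⟨ht, le_rfl⟩⟩

theorem sqrt_le_exp_neg_mul_add_integral (ht : 0 ≤ t) (hv : ContinuousOn v (Icc 0 t))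
    (hv' : ∀ s ∈ Ico 0 t, HasDerivWithinAt v (v' s) (Ici s) s)
    (hA : ∀ s, HasDerivAt A (a s) s) (hA0 : A 0 = 0) (hb : Continuous b)
    (hb0 : ∀ s ∈ Icc 0 t, 0 ≤ b s)
    (hbound : ∀ s ∈ Ico 0 t, v' s + 2 * a s * v s ≤ 2 * b s * √(v s)) :
    √(v t) ≤ exp (-A t) * √(v 0) + exp (-A t) * ∫ s in (0:ℝ)..t, exp (A s) * b s := by
  have hlim : Tendsto (fun ε : ℝ => exp (-A t) *
      (√(v 0) + ε + ε * t + ∫ s in (0:ℝ)..t, exp (A s) * b s)) (𝓝[>] 0)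
      (𝓝 (exp (-A t) * √(v 0) + exp (-A t) * ∫ s in (0:ℝ)..t, exp (A s) * b s)) :=
    tendsto_nhdsWithin_of_tendsto_nhds ((by fun_prop : Continuous _).tendsto' 0 _ (by ring))
  exact ge_of_tendsto hlim (eventually_nhdsWithin_of_forall fun ε hε =>
    sqrt_le_exp_neg_mul_add_integral_add ht hv hv' hA hA0 hb hb0 hbound hε)

end Comparison

theorem stmt16_general {H : Type*} [NormedAddCommGroup H] [InnerProductSpace ℝ H]
    (C : Set H) (hCconv : Convex ℝ C)
    (f T : H → H) (hfC : Set.MapsTo f C C) (hTC : Set.MapsTo T C C)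
    (α : ℝ)
    (hf : ∀ x ∈ C, ∀ y ∈ C, ‖f x - f y‖ ≤ α * ‖x - y‖)
    (hT : ∀ x ∈ C, ∀ y ∈ C, ‖T x - T y‖ ≤ ‖x - y‖)
    (θ : ℝ → ℝ) (hθc : Continuous θ) (hθ : ∀ t, 0 ≤ t → 0 < θ t ∧ θ t ≤ 1)
    -- projC is the metric projection onto C
    (projC : H → H)
    (hproj : ∀ z : H, projC z ∈ C ∧ ∀ y ∈ C, ‖z - projC z‖ ≤ ‖z - y‖)
    (h : ℝ → H) (hhc : Continuous h)
    (x x' y y' : ℝ → H)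
    (hx' : ∀ t, 0 ≤ t → HasDerivAt x (x' t) t)
    (hy' : ∀ t, 0 ≤ t → HasDerivAt y (y' t) t)
    (hxC : ∀ t, 0 ≤ t → x t ∈ C) (hyC : ∀ t, 0 ≤ t → y t ∈ C)
    (hodex : ∀ t, 0 ≤ t →
      x' t + x t = θ t • f (x t) + (1 - θ t) • T (x t))
    (hodey : ∀ t, 0 ≤ t →
      y' t + y t = projC (θ t • f (y t) + (1 - θ t) • T (y t) + h t)) :
    (∀ t, 0 ≤ t → ∀ v' : ℝ,
      HasDerivAt (fun s => ‖x s - y s‖ ^ 2) v' t →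
        v' + 2 * (1 - α) * θ t * ‖x t - y t‖ ^ 2 ≤
          2 * ‖h t‖ * Real.sqrt (‖x t - y t‖ ^ 2)) ∧
    (∀ t, 0 ≤ t →
      Real.sqrt (‖x t - y t‖ ^ 2) ≤
        Real.exp (-((1 - α) * ∫ s in (0:ℝ)..t, θ s)) * Real.sqrt (‖x 0 - y 0‖ ^ 2) +
          Real.exp (-((1 - α) * ∫ s in (0:ℝ)..t, θ s)) *
            ∫ s in (0:ℝ)..t, Real.exp ((1 - α) * ∫ τ in (0:ℝ)..s, θ τ) * ‖h s‖) := by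
  have hv : ∀ t, 0 ≤ t →
      HasDerivAt (fun s => ‖x s - y s‖ ^ 2) (2 * ⟪x t - y t, x' t - y' t⟫) t :=
    fun t ht => ((hx' t ht).sub (hy' t ht)).norm_sq
  have hineq : ∀ t, 0 ≤ t → 2 * ⟪x t - y t, x' t - y' t⟫ + 2 * ((1 - α) * θ t) * ‖x t - y t‖ ^ 2
      ≤ 2 * ‖h t‖ * √(‖x t - y t‖ ^ 2) := by
    intro t ht
    have hdiff : x' t - y' t = (θ t • f (x t) + (1 - θ t) • T (x t) -
        projC (θ t • f (y t) + (1 - θ t) • T (y t) + h t)) - (x t - y t) := by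
      rw [eq_sub_of_add_eq (hodex t ht), eq_sub_of_add_eq (hodey t ht)]
      abel
    have hstep := inner_sub_proj_smul_add_smul_sub_le hCconv hproj (hθ t ht).1.le (hθ t ht).2
      (hfC (hxC t ht)) (hTC (hxC t ht)) (hf _ (hxC t ht) _ (hyC t ht))
      (hT _ (hxC t ht) _ (hyC t ht)) (h t)
    rw [hdiff, sqrt_sq (norm_nonneg _)]
    linarith
  refine ⟨fun t ht v' hv' => ?_, fun t ht => ?_⟩
  · rw [hv'.unique (hv t ht), mul_assoc 2 (1 - α)]
    exact hineq t ht
  · have hΘ : ∀ s, HasDerivAt (fun r => (1 - α) * ∫ τ in (0:ℝ)..r, θ τ) ((1 - α) * θ s) s :=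
      fun s => (hθc.integral_hasStrictDerivAt 0 s).hasDerivAt.const_mul _
    exact sqrt_le_exp_neg_mul_add_integral ht
      (fun s hs => (hv s hs.1).continuousAt.continuousWithinAt)
      (fun s hs => (hv s hs.1).hasDerivWithinAt) hΘ (by simp) hhc.norm
      (fun _ _ => norm_nonneg _) (fun s hs => hineq s hs.1)

theorem stmt16 {H : Type*} [NormedAddCommGroup H] [InnerProductSpace ℝ H]
    [CompleteSpace H]
    (C : Set H) (hCne : C.Nonempty) (hCcl : IsClosed C) (hCconv : Convex ℝ C)
    (f T : H → H) (hfC : Set.MapsTo f C C) (hTC : Set.MapsTo T C C)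
    (α : ℝ) (hα0 : 0 ≤ α) (hα1 : α < 1)
    (hf : ∀ x ∈ C, ∀ y ∈ C, ‖f x - f y‖ ≤ α * ‖x - y‖)
    (hT : ∀ x ∈ C, ∀ y ∈ C, ‖T x - T y‖ ≤ ‖x - y‖)
    (θ : ℝ → ℝ) (hθc : Continuous θ) (hθ : ∀ t, 0 ≤ t → 0 < θ t ∧ θ t ≤ 1)
    -- projC is the metric projection onto C
    (projC : H → H)
    (hproj : ∀ z : H, projC z ∈ C ∧ ∀ y ∈ C, ‖z - projC z‖ ≤ ‖z - y‖)
    (h : ℝ → H) (hhc : Continuous h)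
    (x x' y y' : ℝ → H)
    (hx' : ∀ t, 0 ≤ t → HasDerivAt x (x' t) t)
    (hy' : ∀ t, 0 ≤ t → HasDerivAt y (y' t) t)
    (hxC : ∀ t, 0 ≤ t → x t ∈ C) (hyC : ∀ t, 0 ≤ t → y t ∈ C)
    (hodex : ∀ t, 0 ≤ t →
      x' t + x t = θ t • f (x t) + (1 - θ t) • T (x t))
    (hodey : ∀ t, 0 ≤ t →
      y' t + y t = projC (θ t • f (y t) + (1 - θ t) • T (y t) + h t)) :
    (∀ t, 0 ≤ t → ∀ v' : ℝ,
      HasDerivAt (fun s => ‖x s - y s‖ ^ 2) v' t →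
        v' + 2 * (1 - α) * θ t * ‖x t - y t‖ ^ 2 ≤
          2 * ‖h t‖ * Real.sqrt (‖x t - y t‖ ^ 2)) ∧
    (∀ t, 0 ≤ t →
      Real.sqrt (‖x t - y t‖ ^ 2) ≤
        Real.exp (-((1 - α) * ∫ s in (0:ℝ)..t, θ s)) * Real.sqrt (‖x 0 - y 0‖ ^ 2) +
          Real.exp (-((1 - α) * ∫ s in (0:ℝ)..t, θ s)) *
            ∫ s in (0:ℝ)..t, Real.exp ((1 - α) * ∫ τ in (0:ℝ)..s, θ τ) * ‖h s‖) :=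
  stmt16_general C hCconv f T hfC hTC α hf hT θ hθc hθ projC hproj h hhc x x' y y' hx' hy' hxC hyC
    hodex hodey
end

section
/- Let x : [0,∞) → C be a bounded C¹ solution of x'(t) + x(t) = θ(t) f(x(t)) + (1 − θ(t)) T(x(t)) with θ(t) → 0 and ‖x'(t)‖ → 0 as t → ∞, and let q* be the unique solution of (VP). Then limsup_{t → ∞} ⟨f(q*) − q*, x(t) − q*⟩ ≤ 0. -/
/-!
The ODE gives `x - T x = θ • (f x - T x) - x'`, so `‖x t - T (x t)‖ → 0`. Choose an ultrafilter
finer than `atTop` along which `⟪f q - q, x t - q⟫` tends to its limsup. Along it the bounded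
trajectory converges weakly (Riesz representation of the limit functional) to some `z`, which lies
in `C` because closed convex sets are weakly closed, and is a fixed point of `T` by demiclosedness.
Hence the limsup equals `⟪f q - q, z - q⟫ ≤ 0` by the variational inequality.
-/

open Filter Topology RealInnerProductSpace

lemma norm_le_of_lipschitzOn {E F : Type*} [NormedAddCommGroup E] [NormedAddCommGroup F]
    {C : Set E} {g : E → F} {K R : ℝ} (hK : 0 ≤ K)
    (hg : ∀ y ∈ C, ∀ y' ∈ C, ‖g y - g y'‖ ≤ K * ‖y - y'‖) {p y : E} (hp : p ∈ C) (hy : y ∈ C)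
    (hyR : ‖y‖ ≤ R) : ‖g y‖ ≤ ‖g p‖ + K * (R + ‖p‖) :=
  calc ‖g y‖ ≤ ‖g p‖ + ‖g y - g p‖ := norm_le_insert' _ _
    _ ≤ ‖g p‖ + K * ‖y - p‖ := by gcongr; exact hg y hy p hp
    _ ≤ ‖g p‖ + K * (R + ‖p‖) := by gcongr; exact (norm_sub_le _ _).trans (by gcongr)

section Filters

variable {ι : Type*}

theorem Ultrafilter.exists_tendsto_of_isCompact {X : Type*} [TopologicalSpace X] {K : Set X}
    (hK : IsCompact K) (𝒰 : Ultrafilter ι) {g : ι → X} (hg : ∀ᶠ t in 𝒰, g t ∈ K) :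
    ∃ a, Tendsto g 𝒰 (𝓝 a) :=
  let ⟨a, _, ha⟩ := hK.ultrafilter_le_nhds' (𝒰.map g) hg
  ⟨a, ha⟩

theorem exists_ultrafilter_le_tendsto_limsup {l : Filter ι} [l.NeBot] {u : ι → ℝ} {M : ℝ}
    (hu : ∀ᶠ t in l, |u t| ≤ M) :
    ∃ 𝒰 : Ultrafilter ι, ↑𝒰 ≤ l ∧ Tendsto u 𝒰 (𝓝 (limsup u l)) := by
  have hb : IsBoundedUnder (· ≤ ·) l u :=
    isBoundedUnder_of_eventually_le (hu.mono fun _ h => (abs_le.1 h).2)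
  have hc : IsCoboundedUnder (· ≤ ·) l u :=
    (isBoundedUnder_of_eventually_ge (hu.mono fun _ h => (abs_le.1 h).1)).isCoboundedUnder_le
  exact mapClusterPt_iff_ultrafilter.1 (isGreatest_mapClusterPt_limsup hc hb).1

end Filters

section Hilbert

variable {ι H : Type*} [NormedAddCommGroup H] [InnerProductSpace ℝ H]

def WeakTendsto (x : ι → H) (l : Filter ι) (z : H) : Prop :=
  ∀ v, Tendsto (fun t => ⟪v, x t⟫) l (𝓝 ⟪v, z⟫)

theorem exists_weakTendsto_of_ultrafilter [CompleteSpace H] (𝒰 : Ultrafilter ι) {x : ι → H}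
    {R : ℝ} (hR : ∀ᶠ t in 𝒰, ‖x t‖ ≤ R) : ∃ z, WeakTendsto x 𝒰 z := by
  have hbound : ∀ v, ∀ᶠ t in 𝒰, |⟪v, x t⟫| ≤ R * ‖v‖ := fun v =>
    hR.mono fun t ht => (abs_real_inner_le_norm _ _).trans (by rw [mul_comm]; gcongr)
  have hlim : ∀ v, ∃ a, Tendsto (fun t => ⟪v, x t⟫) 𝒰 (𝓝 a) := fun v =>
    𝒰.exists_tendsto_of_isCompact (isCompact_Icc (a := -(R * ‖v‖)) (b := R * ‖v‖))
      ((hbound v).mono fun _ h => abs_le.1 h)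
  choose φ hφ using hlim
  let Φ : H →ₗ[ℝ] ℝ :=
    { toFun := φ
      map_add' := fun v w => tendsto_nhds_unique (hφ (v + w)) <| by
        simpa only [inner_add_left] using (hφ v).add (hφ w)
      map_smul' := fun c v => tendsto_nhds_unique (hφ (c • v)) <| by
        simpa only [real_inner_smul_left, RingHom.id_apply, smul_eq_mul] using
          (hφ v).const_mul c }
  have hΦ : ∀ v, ‖Φ v‖ ≤ R * ‖v‖ := fun v =>
    le_of_tendsto (hφ v).abs (hbound v)
  refine ⟨(InnerProductSpace.toDual ℝ H).symm (Φ.mkContinuous R hΦ), fun v => ?_⟩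
  rw [real_inner_comm, InnerProductSpace.toDual_symm_apply]
  exact hφ v

namespace WeakTendsto

variable {x : ι → H} {l : Filter ι} {z : H}

theorem tendsto_inner_sub (hz : WeakTendsto x l z) (u p : H) :
    Tendsto (fun t => ⟪u, x t - p⟫) l (𝓝 ⟪u, z - p⟫) := by
  simpa only [inner_sub_right] using (hz u).sub_const ⟪u, p⟫

theorem mem_of_isClosed_of_convex [CompleteSpace H] [l.NeBot] (hz : WeakTendsto x l z)
    {C : Set H} (hCcl : IsClosed C) (hCconv : Convex ℝ C) (hxC : ∀ᶠ t in l, x t ∈ C) :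
    z ∈ C := by
  by_contra hzC
  obtain ⟨g, s, hgC, hgz⟩ := geometric_hahn_banach_closed_point hCconv hCcl hzC
  have hg : Tendsto (fun t => g (x t)) l (𝓝 (g z)) := by
    simpa only [InnerProductSpace.toDual_symm_apply] using
      hz ((InnerProductSpace.toDual ℝ H).symm g)
  exact hgz.not_ge (le_of_tendsto hg (hxC.mono fun t ht => (hgC _ ht).le))

theorem map_eq_self_of_nonexpansive [l.NeBot] (hz : WeakTendsto x l z) {C : Set H}
    {T : H → H} (hT : ∀ y ∈ C, ∀ y' ∈ C, ‖T y - T y'‖ ≤ ‖y - y'‖) (hzC : z ∈ C)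
    (hxC : ∀ᶠ t in l, x t ∈ C) {R : ℝ} (hR : ∀ᶠ t in l, ‖x t‖ ≤ R)
    (hreg : Tendsto (fun t => ‖x t - T (x t)‖) l (𝓝 0)) : T z = z := by
  set d := fun t => ‖x t - T (x t)‖
  -- The left side is `‖x - T z‖² - ‖x - z‖²`, which is at most `d (d + 2‖x - z‖)`.
  have hle : ∀ᶠ t in l,
      2 * ⟪z - T z, x t - z⟫ + ‖z - T z‖ ^ 2 ≤ d t * (d t + 2 * (R + ‖z‖)) := by
    filter_upwards [hxC, hR] with t htC htR
    have hsplit := norm_add_sq_real (x t - z) (z - T z)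
    rw [sub_add_sub_cancel, real_inner_comm] at hsplit
    have htri : ‖x t - T z‖ ≤ d t + ‖x t - z‖ :=
      (norm_sub_le_norm_sub_add_norm_sub _ (T (x t)) _).trans (by gcongr; exact hT _ htC _ hzC)
    have hxz : ‖x t - z‖ ≤ R + ‖z‖ := (norm_sub_le _ _).trans (by gcongr)
    have hd : 0 ≤ d t := norm_nonneg _
    nlinarith [norm_nonneg (x t - T z)]
  have hlhs : Tendsto (fun t => 2 * ⟪z - T z, x t - z⟫ + ‖z - T z‖ ^ 2) l
      (𝓝 (‖z - T z‖ ^ 2)) := by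
    simpa using ((hz.tendsto_inner_sub (z - T z) z).const_mul 2).add_const (‖z - T z‖ ^ 2)
  have hrhs : Tendsto (fun t => d t * (d t + 2 * (R + ‖z‖))) l (𝓝 0) := by
    simpa using hreg.mul (hreg.add_const (2 * (R + ‖z‖)))
  have hsq : ‖z - T z‖ ^ 2 ≤ 0 := le_of_tendsto_of_tendsto hlhs hrhs hle
  have : ‖z - T z‖ = 0 := pow_eq_zero_iff two_ne_zero |>.1 (le_antisymm hsq (sq_nonneg _))
  exact (sub_eq_zero.1 (norm_eq_zero.1 this)).symm

end WeakTendsto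

end Hilbert

theorem tendsto_norm_sub_of_eq_smul_add {ι E : Type*} [NormedAddCommGroup E] [NormedSpace ℝ E]
    {l : Filter ι} {x x' F G : ι → E} {θ : ι → ℝ} {A B : ℝ}
    (hode : ∀ᶠ t in l, x' t + x t = θ t • F t + (1 - θ t) • G t)
    (hθ : Tendsto θ l (𝓝 0)) (hx' : Tendsto (fun t => ‖x' t‖) l (𝓝 0))
    (hF : ∀ᶠ t in l, ‖F t‖ ≤ A) (hG : ∀ᶠ t in l, ‖G t‖ ≤ B) :
    Tendsto (fun t => ‖x t - G t‖) l (𝓝 0) := by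
  have hFG : ∀ᶠ t in l, ‖F t - G t‖ ≤ A + B := by
    filter_upwards [hF, hG] with t hFt hGt
    exact (norm_sub_le _ _).trans (add_le_add hFt hGt)
  have hlim : Tendsto (fun t => θ t • (F t - G t) - x' t) l (𝓝 0) := by
    simpa using (hθ.zero_smul_isBoundedUnder_le (isBoundedUnder_of_eventually_le hFG)).sub
      (tendsto_zero_iff_norm_tendsto_zero.2 hx')
  refine (tendsto_zero_iff_norm_tendsto_zero.1 hlim).congr' ?_
  filter_upwards [hode] with t ht
  rw [show x t - G t = θ t • (F t - G t) - x' t by linear_combination (norm := module) ht]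

theorem stmt18_general {H : Type*} [NormedAddCommGroup H] [InnerProductSpace ℝ H]
    [CompleteSpace H]
    (C : Set H) (hCcl : IsClosed C) (hCconv : Convex ℝ C)
    (f T : H → H)
    (α : ℝ) (hα0 : 0 ≤ α)
    (hf : ∀ x ∈ C, ∀ y ∈ C, ‖f x - f y‖ ≤ α * ‖x - y‖)
    (hT : ∀ x ∈ C, ∀ y ∈ C, ‖T x - T y‖ ≤ ‖x - y‖)
    (θ : ℝ → ℝ)
    (hθ0 : Tendsto θ atTop (𝓝 0))
    (x x' : ℝ → H)
    (hode : ∀ t, 0 ≤ t →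
      x' t + x t = θ t • f (x t) + (1 - θ t) • T (x t))
    (hxC : ∀ t, 0 ≤ t → x t ∈ C)
    (hbdd : ∃ R : ℝ, ∀ t, 0 ≤ t → ‖x t‖ ≤ R)
    (hx'0 : Tendsto (fun t => ‖x' t‖) atTop (𝓝 0))
    (q : H) (hq : q ∈ C ∧ T q = q)
    (hVP : ∀ z, z ∈ C ∧ T z = z → ⟪f q - q, z - q⟫ ≤ 0) :
    limsup (fun t => ⟪f q - q, x t - q⟫) atTop ≤ 0 := by
  obtain ⟨R, hR⟩ := hbdd
  have hxC' : ∀ᶠ t in atTop, x t ∈ C := eventually_atTop.2 ⟨0, hxC⟩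
  have hR' : ∀ᶠ t in atTop, ‖x t‖ ≤ R := eventually_atTop.2 ⟨0, hR⟩
  have hreg : Tendsto (fun t => ‖x t - T (x t)‖) atTop (𝓝 0) :=
    tendsto_norm_sub_of_eq_smul_add (eventually_atTop.2 ⟨0, hode⟩) hθ0 hx'0
      ((hxC'.and hR').mono fun _ h => norm_le_of_lipschitzOn hα0 hf hq.1 h.1 h.2)
      ((hxC'.and hR').mono fun _ h => norm_le_of_lipschitzOn zero_le_one (by simpa using hT)
        hq.1 h.1 h.2)
  have hbound : ∀ᶠ t in atTop, |⟪f q - q, x t - q⟫| ≤ ‖f q - q‖ * (R + ‖q‖) :=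
    hR'.mono fun t ht => (abs_real_inner_le_norm _ _).trans <| by
      gcongr; exact (norm_sub_le _ _).trans (by gcongr)
  obtain ⟨𝒰, h𝒰, hlimsup⟩ := exists_ultrafilter_le_tendsto_limsup hbound
  obtain ⟨z, hz⟩ := exists_weakTendsto_of_ultrafilter 𝒰 (hR'.filter_mono h𝒰)
  have hzC : z ∈ C := hz.mem_of_isClosed_of_convex hCcl hCconv (hxC'.filter_mono h𝒰)
  have hTz : T z = z := hz.map_eq_self_of_nonexpansive hT hzC (hxC'.filter_mono h𝒰)
    (hR'.filter_mono h𝒰) (hreg.mono_left h𝒰)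
  rw [tendsto_nhds_unique hlimsup (hz.tendsto_inner_sub _ _)]
  exact hVP z ⟨hzC, hTz⟩

theorem stmt18 {H : Type*} [NormedAddCommGroup H] [InnerProductSpace ℝ H]
    [CompleteSpace H]
    (C : Set H) (hCne : C.Nonempty) (hCcl : IsClosed C) (hCconv : Convex ℝ C)
    (f T : H → H) (hfC : Set.MapsTo f C C) (hTC : Set.MapsTo T C C)
    (α : ℝ) (hα0 : 0 ≤ α) (hα1 : α < 1)
    (hf : ∀ x ∈ C, ∀ y ∈ C, ‖f x - f y‖ ≤ α * ‖x - y‖)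
    (hT : ∀ x ∈ C, ∀ y ∈ C, ‖T x - T y‖ ≤ ‖x - y‖)
    (hFix : {z | z ∈ C ∧ T z = z}.Nonempty)
    (θ : ℝ → ℝ) (hθc : Continuous θ) (hθ : ∀ t, 0 ≤ t → 0 < θ t ∧ θ t ≤ 1)
    (hθ0 : Tendsto θ atTop (𝓝 0))
    (x x' : ℝ → H) (hx' : ∀ t, 0 ≤ t → HasDerivAt x (x' t) t)
    (hode : ∀ t, 0 ≤ t →
      x' t + x t = θ t • f (x t) + (1 - θ t) • T (x t))
    (hxC : ∀ t, 0 ≤ t → x t ∈ C)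
    (hbdd : ∃ R : ℝ, ∀ t, 0 ≤ t → ‖x t‖ ≤ R)
    (hx'0 : Tendsto (fun t => ‖x' t‖) atTop (𝓝 0))
    (q : H) (hq : q ∈ C ∧ T q = q)
    (hVP : ∀ z, z ∈ C ∧ T z = z → ⟪f q - q, z - q⟫ ≤ 0) :
    limsup (fun t => ⟪f q - q, x t - q⟫) atTop ≤ 0 :=
  stmt18_general C hCcl hCconv f T α hα0 hf hT θ hθ0 x x' hode hxC hbdd hx'0 q hq hVP
end

section
/- Let K be a nonempty closed convex subset of a real Hilbert space H, A : K → K nonexpansive, and {xₙ} a sequence in K converging weakly to x̄ with xₙ − A(xₙ) → 0 strongly. Then x̄ ∈ K and A(x̄) = x̄. -/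
open Filter Topology RealInnerProductSpace

/-! Weak limits stay in closed convex sets by Hahn–Banach, so nonexpansiveness applies at `xbar`:
`‖xₙ - A xbar‖ ≤ ‖xₙ - A xₙ‖ + ‖xₙ - xbar‖`. Expanding
`‖(xₙ - xbar) + (xbar - y)‖²`, weak convergence gives
`‖xₙ - y‖² - ‖xₙ - xbar‖² → ‖xbar - y‖²`; for `y = A xbar` the left side is squeezed to `0`
because `xₙ - A xₙ → 0` and weakly convergent sequences are bounded (Banach–Steinhaus). -/

section WeakConvergence

variable {H ι : Type*} [NormedAddCommGroup H] [InnerProductSpace ℝ H] {l : Filter ι}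
  {x : ι → H} {xbar : H}

theorem IsClosed.mem_of_tendsto_inner [CompleteSpace H] [l.NeBot] {K : Set H}
    (hKcl : IsClosed K) (hKconv : Convex ℝ K) (hxK : ∀ i, x i ∈ K)
    (hweak : ∀ φ : H, Tendsto (fun i => ⟪x i, φ⟫) l (𝓝 ⟪xbar, φ⟫)) : xbar ∈ K := by
  by_contra hxbar
  obtain ⟨f, u, hfK, hfxbar⟩ := geometric_hahn_banach_closed_point hKconv hKcl hxbar
  have hf : ∀ z, ⟪z, (InnerProductSpace.toDual ℝ H).symm f⟫ = f z := fun z => by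
    rw [real_inner_comm, InnerProductSpace.toDual_symm_apply]
  have hle : f xbar ≤ u := by
    simp_rw [← hf]
    exact le_of_tendsto (hweak _)
      (Eventually.of_forall fun i => (hf _).trans_le (hfK _ (hxK i)).le)
  exact hle.not_gt hfxbar

theorem exists_norm_le_of_tendsto_inner [CompleteSpace H] {x : ℕ → H}
    (hweak : ∀ φ : H, Tendsto (fun n => ⟪x n, φ⟫) atTop (𝓝 ⟪xbar, φ⟫)) :
    ∃ C, ∀ n, ‖x n‖ ≤ C := by
  obtain ⟨C, hC⟩ : ∃ C, ∀ n, ‖innerSL ℝ (x n)‖ ≤ C := banach_steinhaus fun φ => by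
    obtain ⟨C, hC⟩ := (hweak φ).norm.bddAbove_range
    exact ⟨C, fun n => by simpa using hC ⟨n, rfl⟩⟩
  exact ⟨C, fun n => by simpa using hC n⟩

theorem tendsto_norm_sub_sq_sub_norm_sub_sq_of_tendsto_inner
    (hweak : ∀ φ : H, Tendsto (fun i => ⟪x i, φ⟫) l (𝓝 ⟪xbar, φ⟫)) (y : H) :
    Tendsto (fun i => ‖x i - y‖ ^ 2 - ‖x i - xbar‖ ^ 2) l (𝓝 (‖xbar - y‖ ^ 2)) := by
  have hexpand : ∀ i, ‖x i - y‖ ^ 2 - ‖x i - xbar‖ ^ 2 =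
      2 * (⟪x i, xbar - y⟫ - ⟪xbar, xbar - y⟫) + ‖xbar - y‖ ^ 2 := fun i => by
    rw [← sub_add_sub_cancel (x i) xbar y, norm_add_sq_real, inner_sub_left]
    ring
  simp_rw [hexpand]
  simpa using (((hweak (xbar - y)).sub_const ⟪xbar, xbar - y⟫).const_mul 2).add_const
    (‖xbar - y‖ ^ 2)

theorem eq_of_tendsto_inner_of_norm_sub_le {C : ℝ} (hbdd : ∀ i, ‖x i‖ ≤ C)
    (hweak : ∀ φ : H, Tendsto (fun i => ⟪x i, φ⟫) l (𝓝 ⟪xbar, φ⟫)) [l.NeBot] {y : H}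
    {ε : ι → ℝ} (hε : Tendsto ε l (𝓝 0)) (hy : ∀ i, ‖x i - y‖ ≤ ε i + ‖x i - xbar‖) :
    y = xbar := by
  set M := C + ‖xbar‖
  have hbound : ∀ i, ‖x i - y‖ ^ 2 - ‖x i - xbar‖ ^ 2 ≤ ε i ^ 2 + 2 * |ε i| * M := fun i => by
    have hM : ‖x i - xbar‖ ≤ M := (norm_sub_le _ _).trans (by linarith [hbdd i])
    have hsq : ‖x i - y‖ ^ 2 ≤ (|ε i| + ‖x i - xbar‖) ^ 2 :=
      pow_le_pow_left₀ (norm_nonneg _) ((hy i).trans (by linarith [le_abs_self (ε i)])) 2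
    nlinarith [sq_abs (ε i), abs_nonneg (ε i), norm_nonneg (x i - xbar)]
  have hbound_lim : Tendsto (fun i => ε i ^ 2 + 2 * |ε i| * M) l (𝓝 0) := by
    simpa using (hε.pow 2).add ((hε.abs.const_mul 2).mul_const M)
  have hsq : ‖xbar - y‖ ^ 2 ≤ 0 := le_of_tendsto_of_tendsto'
    (tendsto_norm_sub_sq_sub_norm_sub_sq_of_tendsto_inner hweak y) hbound_lim hbound
  rw [← sub_eq_zero, ← norm_eq_zero]
  nlinarith [norm_nonneg (xbar - y), norm_sub_rev y xbar]

end WeakConvergence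

theorem stmt19_general {H : Type*} [NormedAddCommGroup H] [InnerProductSpace ℝ H]
    [CompleteSpace H]
    (K : Set H) (hKcl : IsClosed K) (hKconv : Convex ℝ K)
    (A : H → H)
    (hA : ∀ x ∈ K, ∀ y ∈ K, ‖A x - A y‖ ≤ ‖x - y‖)
    (x : ℕ → H) (hxK : ∀ n, x n ∈ K) (xbar : H)
    (hweak : ∀ φ : H, Tendsto (fun n => ⟪x n, φ⟫) atTop (𝓝 ⟪xbar, φ⟫))
    (hres : Tendsto (fun n => x n - A (x n)) atTop (𝓝 0)) :
    xbar ∈ K ∧ A xbar = xbar := by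
  have hxbarK : xbar ∈ K := hKcl.mem_of_tendsto_inner hKconv hxK hweak
  obtain ⟨C, hC⟩ := exists_norm_le_of_tendsto_inner hweak
  refine ⟨hxbarK, eq_of_tendsto_inner_of_norm_sub_le hC hweak (by simpa using hres.norm)
    fun n => ?_⟩
  calc ‖x n - A xbar‖ = ‖(x n - A (x n)) + (A (x n) - A xbar)‖ := by rw [sub_add_sub_cancel]
    _ ≤ ‖x n - A (x n)‖ + ‖x n - xbar‖ :=
      (norm_add_le _ _).trans (add_le_add_right (hA _ (hxK n) _ hxbarK) _)

theorem stmt19 {H : Type*} [NormedAddCommGroup H] [InnerProductSpace ℝ H]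
    [CompleteSpace H]
    (K : Set H) (hKne : K.Nonempty) (hKcl : IsClosed K) (hKconv : Convex ℝ K)
    (A : H → H) (hAK : Set.MapsTo A K K)
    (hA : ∀ x ∈ K, ∀ y ∈ K, ‖A x - A y‖ ≤ ‖x - y‖)
    (x : ℕ → H) (hxK : ∀ n, x n ∈ K) (xbar : H)
    (hweak : ∀ φ : H, Tendsto (fun n => ⟪x n, φ⟫) atTop (𝓝 ⟪xbar, φ⟫))
    (hres : Tendsto (fun n => x n - A (x n)) atTop (𝓝 0)) :
    xbar ∈ K ∧ A xbar = xbar :=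
  stmt19_general K hKcl hKconv A hA x hxK xbar hweak hres
end
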